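/- arXiv:2603.07555 — 3 statements merged into one kernel-verified Lean document; each statement's English description precedes it below -/
import Mathlib

section
/- Let G be a game with no cycle of total weight zero, and define the potential φ : V → ℤ by φ(v) = supΣ-value(v) if the MP-value of v is < 0, and φ(v) = infΣ-value(v) if the MP-value of v is > 0 (these values are finite integers). Then φ is a reducing potential for G. -/
/-!
Basic definitions for mean-payoff games: games, infinite paths, positional
strategies, the valuations MP, supΣ^X and infΣ^X, values of vertices,
zones N, P, ZN, ZP (also relative to a sub-arena), reduced games,
potentials and potential reductions, traps.
-/

/-- A game: a sinkless directed graph with integer weights, whose vertices are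
partitioned into Min-vertices (`IsMin`) and Max-vertices (`¬ IsMin`). -/
structure MPGame (V : Type*) where
  E : V → V → Prop
  w : V → V → ℤ
  IsMin : V → Prop
  sinkless : ∀ v, ∃ v', E v v'

namespace MPGame

variable {V : Type*}

/-- An infinite path in a game. -/
structure Path (G : MPGame V) where
  vert : ℕ → V
  adj : ∀ i, G.E (vert i) (vert (i + 1))

/-- The sum of the weights of the first `k` edges of a path. -/
def Path.wsum {G : MPGame V} (π : G.Path) (k : ℕ) : ℤ :=
  ∑ i ∈ Finset.range k, G.w (π.vert i) (π.vert (i + 1))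

/-- The tail of a path (drop the first vertex). -/
def Path.tail {G : MPGame V} (π : G.Path) : G.Path :=
  ⟨fun i => π.vert (i + 1), fun i => π.adj (i + 1)⟩

/-- A positional strategy `σ : V → V` is legal if it always follows an edge. -/
def Legal (G : MPGame V) (σ : V → V) : Prop := ∀ v, G.E v (σ v)

/-- Consistency of a path with a positional Min-strategy. -/
def Path.ConsMin {G : MPGame V} (π : G.Path) (σ : V → V) : Prop :=
  ∀ i, G.IsMin (π.vert i) → π.vert (i + 1) = σ (π.vert i)

/-- Consistency of a path with a positional Max-strategy. -/
def Path.ConsMax {G : MPGame V} (π : G.Path) (τ : V → V) : Prop :=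
  ∀ i, ¬ G.IsMin (π.vert i) → π.vert (i + 1) = τ (π.vert i)

/-- The mean-payoff valuation `MP(π) = limsup_k (1/k) ∑_{i<k} w_i`. -/
noncomputable def MP {G : MPGame V} (π : G.Path) : EReal :=
  Filter.limsup (fun k => (((π.wsum k : ℝ) / (k : ℝ)) : EReal)) Filter.atTop

/-- `supΣ^X(π) = sup_{k ≤ n_X} ∑_{i<k} w_i`, where `n_X` is the first hitting
time of `X` (all `k` if `X` is never hit). -/
noncomputable def supSigma {G : MPGame V} (X : Set V) (π : G.Path) : EReal :=
  ⨆ k : {k : ℕ // ∀ i < k, π.vert i ∉ X}, ((π.wsum k.1 : ℝ) : EReal)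

/-- `infΣ^X(π) = inf_{k ≤ n_X} ∑_{i<k} w_i`. -/
noncomputable def infSigma {G : MPGame V} (X : Set V) (π : G.Path) : EReal :=
  ⨅ k : {k : ℕ // ∀ i < k, π.vert i ∉ X}, ((π.wsum k.1 : ℝ) : EReal)

/-- `inf_σ sup_{π ⊨ σ, π from v} val(π)`, over legal positional Min-strategies. -/
noncomputable def minVal (G : MPGame V) (val : G.Path → EReal) (v : V) : EReal :=
  ⨅ σ : {σ : V → V // G.Legal σ},
    ⨆ π : {π : G.Path // π.vert 0 = v ∧ π.ConsMin σ.1}, val π.1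

/-- `sup_τ inf_{π ⊨ τ, π from v} val(π)`, over legal positional Max-strategies. -/
noncomputable def maxVal (G : MPGame V) (val : G.Path → EReal) (v : V) : EReal :=
  ⨆ τ : {τ : V → V // G.Legal τ},
    ⨅ π : {π : G.Path // π.vert 0 = v ∧ π.ConsMax τ.1}, val π.1

/-- The MP-value of a vertex. -/
noncomputable def MPval (G : MPGame V) (v : V) : EReal := G.minVal MP v

/-- The `supΣ^X`-value of a vertex. -/
noncomputable def supSigmaVal (G : MPGame V) (X : Set V) (v : V) : EReal :=
  G.minVal (supSigma X) v

/-- The `infΣ^X`-value of a vertex. -/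
noncomputable def infSigmaVal (G : MPGame V) (X : Set V) (v : V) : EReal :=
  G.minVal (infSigma X) v

/-- `G` has no cycle of total weight zero: no path repeats a vertex with the
same partial sum of weights. -/
def NoZeroCycle (G : MPGame V) : Prop :=
  ∀ (π : G.Path) (i j : ℕ), i < j → π.vert i = π.vert j → π.wsum i ≠ π.wsum j

/-- The zone `N` of the subgame of `G` induced on `D`: vertices whose
immediately optimal edges (within `D`) have weight `< 0`. -/
def NsetOn (G : MPGame V) (D : Set V) : Set V :=
  {v | v ∈ D ∧ ((G.IsMin v ∧ ∃ v' ∈ D, G.E v v' ∧ G.w v v' < 0) ∨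
      (¬ G.IsMin v ∧ ∀ v' ∈ D, G.E v v' → G.w v v' < 0))}

/-- The zone `P` of the subgame of `G` induced on `D`. -/
def PsetOn (G : MPGame V) (D : Set V) : Set V :=
  {v | v ∈ D ∧ ((¬ G.IsMin v ∧ ∃ v' ∈ D, G.E v v' ∧ 0 < G.w v v') ∨
      (G.IsMin v ∧ ∀ v' ∈ D, G.E v v' → 0 < G.w v v'))}

/-- The zone `N` of `G`. -/
def Nset (G : MPGame V) : Set V := G.NsetOn Set.univ

/-- The zone `P` of `G`. -/
def Pset (G : MPGame V) : Set V := G.PsetOn Set.univ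

/-- The zone `ZN` of the subgame of `G` induced on `D`: vertices from which
Min can force that an edge of weight `< 0` is visited before any edge of
weight `> 0` (staying within `D`). -/
inductive ZNr (G : MPGame V) (D : Set V) : V → Prop
  | minNeg (v v' : V) : v ∈ D → G.IsMin v → v' ∈ D → G.E v v' → G.w v v' < 0 →
      ZNr G D v
  | minZero (v v' : V) : v ∈ D → G.IsMin v → v' ∈ D → G.E v v' → G.w v v' = 0 →
      ZNr G D v' → ZNr G D v
  | max (v : V) : v ∈ D → ¬ G.IsMin v →
      (∀ v' ∈ D, G.E v v' → G.w v v' ≤ 0) →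
      (∀ v', v' ∈ D → G.E v v' → G.w v v' = 0 → ZNr G D v') →
      ZNr G D v

/-- The zone `ZP` of the subgame of `G` induced on `D`. -/
inductive ZPr (G : MPGame V) (D : Set V) : V → Prop
  | maxPos (v v' : V) : v ∈ D → ¬ G.IsMin v → v' ∈ D → G.E v v' → 0 < G.w v v' →
      ZPr G D v
  | maxZero (v v' : V) : v ∈ D → ¬ G.IsMin v → v' ∈ D → G.E v v' → G.w v v' = 0 →
      ZPr G D v' → ZPr G D v
  | min (v : V) : v ∈ D → G.IsMin v →
      (∀ v' ∈ D, G.E v v' → 0 ≤ G.w v v') →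
      (∀ v', v' ∈ D → G.E v v' → G.w v v' = 0 → ZPr G D v') →
      ZPr G D v

/-- The zone `ZN` of `G`. -/
def ZN (G : MPGame V) : V → Prop := G.ZNr Set.univ

/-- The zone `ZP` of `G`. -/
def ZP (G : MPGame V) : V → Prop := G.ZPr Set.univ

/-- The subgame of `G` induced on `D` is reduced: from every vertex of `ZN`,
Min can force that the first edge visited has weight `≤ 0` and leads into
`ZN`, and symmetrically for `ZP` and Max. -/
def ReducedOn (G : MPGame V) (D : Set V) : Prop :=
  (∀ v, G.ZNr D v →
     (G.IsMin v → ∃ v' ∈ D, G.E v v' ∧ G.w v v' ≤ 0 ∧ G.ZNr D v') ∧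
     (¬ G.IsMin v → ∀ v' ∈ D, G.E v v' → G.w v v' ≤ 0 ∧ G.ZNr D v')) ∧
  (∀ v, G.ZPr D v →
     (¬ G.IsMin v → ∃ v' ∈ D, G.E v v' ∧ 0 ≤ G.w v v' ∧ G.ZPr D v') ∧
     (G.IsMin v → ∀ v' ∈ D, G.E v v' → 0 ≤ G.w v v' ∧ G.ZPr D v'))

/-- `G` is reduced. -/
def Reduced (G : MPGame V) : Prop := G.ReducedOn Set.univ

/-- The subgame of `G` induced on `D` is positively reduced: `ZN = ∅`. -/
def PosReducedOn (G : MPGame V) (D : Set V) : Prop := ∀ v, ¬ G.ZNr D v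

/-- `A` is a trap for Min: a sinkless subgraph from which Min cannot escape. -/
def TrapForMin (G : MPGame V) (A : Set V) : Prop :=
  (∀ v ∈ A, ∃ v' ∈ A, G.E v v') ∧
  ∀ v ∈ A, G.IsMin v → ∀ v', G.E v v' → v' ∈ A

/-- `A` is a trap for Max: a sinkless subgraph from which Max cannot escape. -/
def TrapForMax (G : MPGame V) (A : Set V) : Prop :=
  (∀ v ∈ A, ∃ v' ∈ A, G.E v v') ∧
  ∀ v ∈ A, ¬ G.IsMin v → ∀ v', G.E v v' → v' ∈ A

/-- The potential reduction of `G` by the potential `φ`. -/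
def pot (G : MPGame V) (φ : V → ℤ) : MPGame V where
  E := G.E
  w := fun v v' => G.w v v' + φ v' - φ v
  IsMin := G.IsMin
  sinkless := G.sinkless

end MPGame

namespace MPGame

variable {V : Type*}

section PathOps

variable {G : MPGame V}

lemma Path.wsum_zero (π : G.Path) : π.wsum 0 = 0 := by simp [Path.wsum]

lemma Path.wsum_succ (π : G.Path) (k : ℕ) :
    π.wsum (k + 1) = π.wsum k + G.w (π.vert k) (π.vert (k + 1)) :=
  Finset.sum_range_succ _ _

lemma Path.wsum_congr {π π' : G.Path} (h : ∀ k, π.vert k = π'.vert k) (k : ℕ) :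
    π.wsum k = π'.wsum k := by
  unfold Path.wsum; exact Finset.sum_congr rfl (fun i _ => by rw [h i, h (i+1)])

open Classical in
noncomputable def nextV (G : MPGame V) (σ : V → V) (x : V) : V :=
  if G.IsMin x then σ x else Classical.choose (G.sinkless x)

lemma nextV_adj {σ : V → V} (hσ : G.Legal σ) (x : V) : G.E x (G.nextV σ x) := by
  unfold nextV
  split
  · exact hσ x
  · exact Classical.choose_spec (G.sinkless x)

lemma nextV_min {σ : V → V} {x : V} (h : G.IsMin x) : G.nextV σ x = σ x := by
  unfold nextV
  exact if_pos h

/-- the play from `v` following `σ` at Min vertices and arbitrary elsewhere -/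
noncomputable def followPlay (G : MPGame V) {σ : V → V} (hσ : G.Legal σ) (v : V) : G.Path where
  vert := fun n => Nat.rec v (fun _ x => G.nextV σ x) n
  adj := fun _ => nextV_adj hσ _

lemma followPlay_vert_zero {σ : V → V} (hσ : G.Legal σ) (v : V) :
    (G.followPlay hσ v).vert 0 = v := rfl

lemma followPlay_consMin {σ : V → V} (hσ : G.Legal σ) (v : V) :
    (G.followPlay hσ v).ConsMin σ := fun _ h => nextV_min h

lemma nonempty_playFrom {σ : V → V} (hσ : G.Legal σ) (v : V) :
    Nonempty {π : G.Path // π.vert 0 = v ∧ π.ConsMin σ} :=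
  ⟨⟨G.followPlay hσ v, rfl, followPlay_consMin hσ v⟩⟩

instance : Nonempty {σ : V → V // G.Legal σ} :=
  ⟨⟨fun v => Classical.choose (G.sinkless v), fun v => Classical.choose_spec (G.sinkless v)⟩⟩

/-- prepend a vertex to a play -/
def Path.cons (v : V) (π : G.Path) (h : G.E v (π.vert 0)) : G.Path where
  vert := fun k => match k with | 0 => v | (k+1) => π.vert k
  adj := fun i => by cases i with
    | zero => exact h
    | succ i => exact π.adj i

@[simp] lemma Path.cons_vert_zero (v : V) (π : G.Path) (h : G.E v (π.vert 0)) :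
    (π.cons v h).vert 0 = v := rfl

@[simp] lemma Path.cons_vert_succ (v : V) (π : G.Path) (h : G.E v (π.vert 0)) (k : ℕ) :
    (π.cons v h).vert (k + 1) = π.vert k := rfl

lemma Path.cons_wsum (v : V) (π : G.Path) (h : G.E v (π.vert 0)) (k : ℕ) :
    (π.cons v h).wsum (k + 1) = G.w v (π.vert 0) + π.wsum k := by
  unfold Path.wsum
  rw [Finset.sum_range_succ']
  rw [add_comm]
  rfl

lemma Path.cons_consMin {σ : V → V} (v : V) (π : G.Path) (h : G.E v (π.vert 0))
    (hc : π.ConsMin σ) (h0 : G.IsMin v → π.vert 0 = σ v) : (π.cons v h).ConsMin σ := by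
  intro i hi
  cases i with
  | zero => exact h0 hi
  | succ i => exact hc i hi

/-- drop the first T vertices -/
def Path.drop (π : G.Path) (T : ℕ) : G.Path where
  vert := fun k => π.vert (T + k)
  adj := fun i => by
    show G.E (π.vert (T + i)) (π.vert (T + (i + 1)))
    rw [← Nat.add_assoc]
    exact π.adj (T + i)

@[simp] lemma Path.drop_vert (π : G.Path) (T k : ℕ) : (π.drop T).vert k = π.vert (T + k) := rfl

lemma Path.drop_consMin {σ : V → V} (π : G.Path) (T : ℕ) (hc : π.ConsMin σ) :
    (π.drop T).ConsMin σ := by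
  intro i hi
  have := hc (T + i) hi
  simpa [Nat.add_assoc] using this

lemma Path.drop_wsum (π : G.Path) (T m : ℕ) :
    π.wsum (T + m) = π.wsum T + (π.drop T).wsum m := by
  induction m with
  | zero => simp [Path.wsum_zero]
  | succ m ih =>
      rw [← Nat.add_assoc, Path.wsum_succ, ih, Path.wsum_succ]
      simp [Nat.add_assoc, add_assoc]

/-- concatenate the first T steps of π with a play χ starting at π.vert T -/
def Path.concatAt (π : G.Path) (T : ℕ) (χ : G.Path) (h0 : χ.vert 0 = π.vert T) : G.Path where
  vert := fun k => if k < T then π.vert k else χ.vert (k - T)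
  adj := fun i => by
    rcases lt_trichotomy (i+1) T with h | h | h
    · have hi : i < T := by omega
      simp only [if_pos hi, if_pos h]
      exact π.adj i
    · have hi : i < T := by omega
      simp only [if_pos hi, if_neg (by omega : ¬ i + 1 < T)]
      have h1 : i + 1 - T = 0 := by omega
      rw [h1, h0, ← h]
      exact π.adj i
    · have hi : ¬ i < T := by omega
      simp only [if_neg hi, if_neg (by omega : ¬ i + 1 < T)]
      have : i + 1 - T = (i - T) + 1 := by omega
      rw [this]
      exact χ.adj (i - T)

lemma Path.concatAt_vert_of_lt (π : G.Path) (T : ℕ) (χ : G.Path) (h0 : χ.vert 0 = π.vert T)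
    {k : ℕ} (h : k < T) : (π.concatAt T χ h0).vert k = π.vert k := if_pos h

lemma Path.concatAt_vert_of_ge (π : G.Path) (T : ℕ) (χ : G.Path) (h0 : χ.vert 0 = π.vert T)
    {k : ℕ} (h : T ≤ k) : (π.concatAt T χ h0).vert k = χ.vert (k - T) :=
  if_neg (by omega)

lemma Path.concatAt_vert_add (π : G.Path) (T : ℕ) (χ : G.Path) (h0 : χ.vert 0 = π.vert T)
    (m : ℕ) : (π.concatAt T χ h0).vert (T + m) = χ.vert m := by
  rw [Path.concatAt_vert_of_ge _ _ _ _ (by omega)]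
  congr 1
  omega

lemma Path.concatAt_vert_le (π : G.Path) (T : ℕ) (χ : G.Path) (h0 : χ.vert 0 = π.vert T)
    {k : ℕ} (h : k ≤ T) : (π.concatAt T χ h0).vert k = π.vert k := by
  rcases lt_or_eq_of_le h with h' | h'
  · exact if_pos h'
  · subst h'
    rw [Path.concatAt_vert_of_ge _ _ _ _ le_rfl, Nat.sub_self, h0]

lemma Path.concatAt_wsum_le (π : G.Path) (T : ℕ) (χ : G.Path) (h0 : χ.vert 0 = π.vert T)
    {m : ℕ} (h : m ≤ T) : (π.concatAt T χ h0).wsum m = π.wsum m := by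
  unfold Path.wsum
  refine Finset.sum_congr rfl (fun i hi => ?_)
  have hi' : i < m := Finset.mem_range.mp hi
  rw [Path.concatAt_vert_le _ _ _ _ (by omega), Path.concatAt_vert_le _ _ _ _ (by omega)]

lemma Path.concatAt_wsum_add (π : G.Path) (T : ℕ) (χ : G.Path) (h0 : χ.vert 0 = π.vert T)
    (m : ℕ) : (π.concatAt T χ h0).wsum (T + m) = π.wsum T + χ.wsum m := by
  induction m with
  | zero => simp [Path.wsum_zero, Path.concatAt_wsum_le _ _ _ _ le_rfl]
  | succ m ih =>
      rw [← Nat.add_assoc, Path.wsum_succ, ih, Path.wsum_succ]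
      rw [Nat.add_assoc]
      rw [Path.concatAt_vert_add, Path.concatAt_vert_add]
      ring

lemma Path.concatAt_consMin {σ : V → V} (π : G.Path) (T : ℕ) (χ : G.Path)
    (h0 : χ.vert 0 = π.vert T)
    (hπ : ∀ t, t < T → G.IsMin (π.vert t) → π.vert (t + 1) = σ (π.vert t))
    (hχ : χ.ConsMin σ) : (π.concatAt T χ h0).ConsMin σ := by
  intro i hi
  rcases lt_or_ge i T with h | h
  · rw [Path.concatAt_vert_le _ _ _ _ (by omega : i + 1 ≤ T),
      Path.concatAt_vert_of_lt _ _ _ _ h] at *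
    exact hπ i h hi
  · rw [Path.concatAt_vert_of_ge _ _ _ _ h, Path.concatAt_vert_of_ge _ _ _ _ (by omega)] at *
    have : i + 1 - T = (i - T) + 1 := by omega
    rw [this]
    exact hχ (i - T) hi

end PathOps

end MPGame
namespace MPGame

variable {V : Type*}

section CycleOps

variable {G : MPGame V}

/-- the play cycling forever around the loop of π between positions i and i+L -/
def Path.cycle (π : G.Path) (i L : ℕ) (hL : 0 < L) (hv : π.vert (i + L) = π.vert i) :
    G.Path where
  vert := fun k => π.vert (i + k % L)
  adj := fun k => by
    have hkL : k % L < L := Nat.mod_lt _ hL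
    have h1 : (k + 1) % L = (k % L + 1) % L := by
      conv_lhs => rw [← Nat.mod_add_div k L]
      rw [Nat.add_right_comm, Nat.add_mul_mod_self_left]
    rcases eq_or_lt_of_le (by omega : k % L + 1 ≤ L) with h | h
    · show G.E (π.vert (i + k % L)) (π.vert (i + (k+1) % L))
      rw [h1, h, Nat.mod_self, Nat.add_zero, ← hv,
        show i + L = i + k % L + 1 by omega]
      exact π.adj (i + k % L)
    · show G.E (π.vert (i + k % L)) (π.vert (i + (k+1) % L))
      rw [h1, Nat.mod_eq_of_lt h]
      exact π.adj (i + k % L)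

lemma Path.cycle_vert (π : G.Path) (i L : ℕ) (hL : 0 < L) (hv : π.vert (i + L) = π.vert i)
    (k : ℕ) : (π.cycle i L hL hv).vert k = π.vert (i + k % L) := rfl

lemma Path.cycle_vert_zero (π : G.Path) (i L : ℕ) (hL : 0 < L) (hv : π.vert (i + L) = π.vert i) :
    (π.cycle i L hL hv).vert 0 = π.vert i := by
  rw [Path.cycle_vert, Nat.zero_mod, Nat.add_zero]

lemma Path.cycle_weight (π : G.Path) (i L : ℕ) (hL : 0 < L) (hv : π.vert (i + L) = π.vert i)
    (k : ℕ) : G.w ((π.cycle i L hL hv).vert k) ((π.cycle i L hL hv).vert (k + 1))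
      = G.w (π.vert (i + k % L)) (π.vert (i + k % L + 1)) := by
  have hkL : k % L < L := Nat.mod_lt _ hL
  have h1 : (k + 1) % L = (k % L + 1) % L := by
    conv_lhs => rw [← Nat.mod_add_div k L]
    rw [Nat.add_right_comm, Nat.add_mul_mod_self_left]
  rw [Path.cycle_vert, Path.cycle_vert]
  rcases eq_or_lt_of_le (by omega : k % L + 1 ≤ L) with h | h
  · rw [h1, h, Nat.mod_self, Nat.add_zero,
      show i + k % L + 1 = i + L by omega, hv]
  · rw [h1, Nat.mod_eq_of_lt h, Nat.add_assoc]

lemma Path.cycle_consMin {σ : V → V} (π : G.Path) (i L : ℕ) (hL : 0 < L)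
    (hv : π.vert (i + L) = π.vert i) (hc : π.ConsMin σ) : (π.cycle i L hL hv).ConsMin σ := by
  intro k hk
  have hkL : k % L < L := Nat.mod_lt _ hL
  have h1 : (k + 1) % L = (k % L + 1) % L := by
    conv_lhs => rw [← Nat.mod_add_div k L]
    rw [Nat.add_right_comm, Nat.add_mul_mod_self_left]
  rw [Path.cycle_vert] at hk ⊢
  rw [Path.cycle_vert]
  rcases eq_or_lt_of_le (by omega : k % L + 1 ≤ L) with h | h
  · rw [h1, h, Nat.mod_self, Nat.add_zero]
    have h2 := hc (i + k % L) hk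
    rw [show i + k % L + 1 = i + L by omega, hv] at h2
    exact h2
  · rw [h1, Nat.mod_eq_of_lt h]
    exact hc (i + k % L) hk

lemma Path.cycle_wsum_loop (π : G.Path) (i L : ℕ) (hL : 0 < L)
    (hv : π.vert (i + L) = π.vert i) :
    (π.cycle i L hL hv).wsum L = π.wsum (i + L) - π.wsum i := by
  have h1 : (π.cycle i L hL hv).wsum L = (π.drop i).wsum L := by
    unfold Path.wsum
    refine Finset.sum_congr rfl (fun k hk => ?_)
    have hk' : k < L := Finset.mem_range.mp hk
    rw [Path.cycle_weight]
    rw [Nat.mod_eq_of_lt hk']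
    rfl
  rw [h1]
  have := π.drop_wsum i L
  omega

lemma Path.cycle_wsum_mul (π : G.Path) (i L : ℕ) (hL : 0 < L)
    (hv : π.vert (i + L) = π.vert i) (m : ℕ) :
    (π.cycle i L hL hv).wsum (m * L) = m * (π.wsum (i + L) - π.wsum i) := by
  induction m with
  | zero => simp [Path.wsum_zero]
  | succ m ih =>
      have hsplit : (π.cycle i L hL hv).wsum (m * L + L)
          = (π.cycle i L hL hv).wsum (m * L) + ((π.cycle i L hL hv).drop (m * L)).wsum L :=
        Path.drop_wsum _ _ _
      have hdrop : ((π.cycle i L hL hv).drop (m * L)).wsum L = (π.cycle i L hL hv).wsum L := by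
        refine Path.wsum_congr (fun k => ?_) L
        show (π.cycle i L hL hv).vert (m * L + k) = _
        rw [Path.cycle_vert, Path.cycle_vert]
        congr 2
        rw [Nat.add_comm, Nat.add_mul_mod_self_right]
      have hm : (m + 1) * L = m * L + L := by ring
      rw [hm, hsplit, hdrop, ih, Path.cycle_wsum_loop]
      push_cast
      ring

/-- pumping: follow π to position i, then loop around the cycle (i, j) forever. -/
def Path.pump (π : G.Path) (i j : ℕ) (hij : i < j) (hv : π.vert j = π.vert i) : G.Path :=
  π.concatAt i (π.cycle i (j - i) (by omega)
      (by rw [show i + (j - i) = j by omega]; exact hv))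
    (by rw [Path.cycle_vert_zero])

lemma Path.pump_vert_zero (π : G.Path) (i j : ℕ) (hij : i < j) (hv : π.vert j = π.vert i) :
    (π.pump i j hij hv).vert 0 = π.vert 0 := by
  unfold Path.pump
  rcases Nat.eq_zero_or_pos i with h | h
  · subst h
    rw [Path.concatAt_vert_le _ _ _ _ le_rfl]
  · exact Path.concatAt_vert_of_lt _ _ _ _ h

lemma Path.pump_consMin {σ : V → V} (π : G.Path) (i j : ℕ) (hij : i < j)
    (hv : π.vert j = π.vert i) (hc : π.ConsMin σ) : (π.pump i j hij hv).ConsMin σ := by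
  unfold Path.pump
  exact Path.concatAt_consMin _ _ _ _ (fun t _ ht => hc t ht) (Path.cycle_consMin _ _ _ _ _ hc)

lemma Path.pump_wsum (π : G.Path) (i j : ℕ) (hij : i < j) (hv : π.vert j = π.vert i) (m : ℕ) :
    (π.pump i j hij hv).wsum (i + m * (j - i)) = π.wsum i + m * (π.wsum j - π.wsum i) := by
  unfold Path.pump
  rw [Path.concatAt_wsum_add, Path.cycle_wsum_mul]
  rw [show i + (j - i) = j by omega]

/-- splicing out the cycle (i,j) of π -/
def Path.splice (π : G.Path) (i j : ℕ) (hij : i < j) (hv : π.vert j = π.vert i) : G.Path :=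
  π.concatAt i (π.drop j) (by rw [Path.drop_vert, Nat.add_zero]; exact hv)

lemma Path.splice_vert_zero (π : G.Path) (i j : ℕ) (hij : i < j) (hv : π.vert j = π.vert i) :
    (π.splice i j hij hv).vert 0 = π.vert 0 := by
  unfold Path.splice
  rcases Nat.eq_zero_or_pos i with h | h
  · subst h
    rw [Path.concatAt_vert_le _ _ _ _ le_rfl]
  · exact Path.concatAt_vert_of_lt _ _ _ _ h

lemma Path.splice_consMin {σ : V → V} (π : G.Path) (i j : ℕ) (hij : i < j)
    (hv : π.vert j = π.vert i) (hc : π.ConsMin σ) : (π.splice i j hij hv).ConsMin σ :=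
  Path.concatAt_consMin _ _ _ _ (fun t _ ht => hc t ht) (π.drop_consMin j hc)

lemma Path.splice_wsum (π : G.Path) (i j : ℕ) (hij : i < j) (hv : π.vert j = π.vert i) (m : ℕ) :
    (π.splice i j hij hv).wsum (i + m) = π.wsum i - π.wsum j + π.wsum (j + m) := by
  unfold Path.splice
  rw [Path.concatAt_wsum_add]
  have := π.drop_wsum j m
  omega

end CycleOps

end MPGame
namespace MPGame

variable {V : Type*}

section Bridging

/-- integer to EReal -/
noncomputable def iE (m : ℤ) : EReal := ((m : ℝ) : EReal)

lemma iE_le_iE {a b : ℤ} : iE a ≤ iE b ↔ a ≤ b := by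
  rw [iE, iE, EReal.coe_le_coe_iff]; exact_mod_cast Iff.rfl

lemma iE_lt_iE {a b : ℤ} : iE a < iE b ↔ a < b := by
  rw [iE, iE, EReal.coe_lt_coe_iff]; exact_mod_cast Iff.rfl

lemma iE_zero : iE 0 = 0 := by simp [iE]

lemma bot_lt_iE (m : ℤ) : (⊥ : EReal) < iE m := EReal.bot_lt_coe _

lemma iE_lt_top (m : ℤ) : iE m < (⊤ : EReal) := EReal.coe_lt_top _

/-- an EReal which is an integer or ⊥ -/
def IsIntBot (x : EReal) : Prop := x = ⊥ ∨ ∃ m : ℤ, x = iE m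

lemma IsIntBot.le_of_lt_add_one {x : EReal} {b : ℤ} (h : IsIntBot x) (hx : x < iE (b + 1)) :
    x ≤ iE b := by
  rcases h with h | ⟨m, rfl⟩
  · exact h ▸ bot_le
  · rw [iE_le_iE]
    rw [iE_lt_iE] at hx
    omega

lemma IsIntBot.ge_of_gt_sub_one {x : EReal} {b : ℤ} (h : IsIntBot x) (hx : iE (b - 1) < x) :
    iE b ≤ x := by
  rcases h with rfl | ⟨m, rfl⟩
  · exact absurd hx (by simp)
  · rw [iE_le_iE]
    rw [iE_lt_iE] at hx
    omega

lemma eq_bot_of_le_all {x : EReal} (h : ∀ b : ℤ, x ≤ iE b) : x = ⊥ := by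
  rw [EReal.eq_bot_iff_forall_lt]
  intro y
  refine lt_of_le_of_lt (h (⌊y⌋ - 1)) ?_
  rw [iE, EReal.coe_lt_coe_iff]
  push_cast
  linarith [Int.floor_le y]

lemma eq_top_of_ge_all {x : EReal} (h : ∀ b : ℤ, iE b ≤ x) : x = ⊤ := by
  rw [EReal.eq_top_iff_forall_lt]
  intro y
  refine lt_of_lt_of_le ?_ (h (⌈y⌉ + 1))
  rw [iE, EReal.coe_lt_coe_iff]
  push_cast
  linarith [Int.le_ceil y]

end Bridging

end MPGame
namespace MPGame

variable {V : Type*}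

section Values

variable {G : MPGame V}

/-- value of a fixed Min strategy -/
noncomputable def sval (G : MPGame V) (val : G.Path → EReal) (σ : V → V) (v : V) : EReal :=
  ⨆ π : {π : G.Path // π.vert 0 = v ∧ π.ConsMin σ}, val π.1

lemma minVal_eq (val : G.Path → EReal) (v : V) :
    G.minVal val v = ⨅ σ : {σ : V → V // G.Legal σ}, G.sval val σ.1 v := rfl

lemma minVal_le_sval (val : G.Path → EReal) {σ : V → V} (hσ : G.Legal σ) (v : V) :
    G.minVal val v ≤ G.sval val σ v := by
  rw [minVal_eq]
  exact iInf_le _ (⟨σ, hσ⟩ : {σ : V → V // G.Legal σ})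

lemma le_sval (val : G.Path → EReal) (σ : V → V) {v : V} {π : G.Path}
    (h0 : π.vert 0 = v) (hc : π.ConsMin σ) : val π ≤ G.sval val σ v :=
  le_iSup_of_le ⟨π, h0, hc⟩ le_rfl

lemma sval_le (val : G.Path → EReal) (σ : V → V) {v : V} {x : EReal}
    (h : ∀ π : G.Path, π.vert 0 = v → π.ConsMin σ → val π ≤ x) :
    G.sval val σ v ≤ x :=
  iSup_le (fun π => h π.1 π.2.1 π.2.2)

lemma le_minVal (val : G.Path → EReal) {v : V} {x : EReal}
    (h : ∀ σ : V → V, G.Legal σ → x ≤ G.sval val σ v) : x ≤ G.minVal val v := by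
  rw [minVal_eq]
  exact le_iInf (fun σ => h σ.1 σ.2)

lemma exists_attaining_strat [Finite V] (val : G.Path → EReal) (v : V) :
    ∃ σ : V → V, G.Legal σ ∧ G.minVal val v = G.sval val σ v := by
  obtain ⟨σ0, hσ0⟩ := Finite.exists_min (fun σ : {σ : V → V // G.Legal σ} => G.sval val σ.1 v)
  exact ⟨σ0.1, σ0.2, le_antisymm (minVal_le_sval val σ0.2 v) (le_minVal val fun σ hσ =>
    le_trans (hσ0 ⟨σ, hσ⟩) le_rfl)⟩

lemma supSigma_empty (π : G.Path) :
    G.supSigma ∅ π = ⨆ k : ℕ, iE (π.wsum k) := by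
  unfold supSigma iE
  apply le_antisymm
  · exact iSup_le (fun k => le_iSup_of_le k.1 le_rfl)
  · exact iSup_le (fun k => le_iSup_of_le ⟨k, by simp⟩ le_rfl)

lemma infSigma_empty (π : G.Path) :
    G.infSigma ∅ π = ⨅ k : ℕ, iE (π.wsum k) := by
  unfold infSigma iE
  apply le_antisymm
  · exact le_iInf (fun k => iInf_le_of_le ⟨k, by simp⟩ le_rfl)
  · exact le_iInf (fun k => iInf_le_of_le k.1 le_rfl)

lemma infSigma_le_wsum (π : G.Path) (k : ℕ) : G.infSigma ∅ π ≤ iE (π.wsum k) := by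
  rw [infSigma_empty]
  exact iInf_le _ k

lemma le_infSigma (π : G.Path) {b : ℤ} (h : ∀ k, b ≤ π.wsum k) :
    iE b ≤ G.infSigma ∅ π := by
  rw [infSigma_empty]
  exact le_iInf (fun k => iE_le_iE.mpr (h k))

lemma infSigma_nonpos (π : G.Path) : G.infSigma ∅ π ≤ 0 := by
  refine le_trans (infSigma_le_wsum π 0) ?_
  rw [π.wsum_zero, iE_zero]

lemma wsum_le_supSigma (π : G.Path) (k : ℕ) : iE (π.wsum k) ≤ G.supSigma ∅ π := by
  rw [supSigma_empty]
  exact le_iSup (fun k => iE (π.wsum k)) k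

lemma supSigma_le (π : G.Path) {b : ℤ} (h : ∀ k, π.wsum k ≤ b) :
    G.supSigma ∅ π ≤ iE b := by
  rw [supSigma_empty]
  exact iSup_le (fun k => iE_le_iE.mpr (h k))

lemma supSigma_nonneg (π : G.Path) : 0 ≤ G.supSigma ∅ π := by
  refine le_trans ?_ (wsum_le_supSigma π 0)
  rw [π.wsum_zero, iE_zero]

lemma supSigma_eq_top (π : G.Path) (h : ∀ b : ℤ, ∃ k, b ≤ π.wsum k) :
    G.supSigma ∅ π = ⊤ := by
  apply eq_top_of_ge_all
  intro b
  obtain ⟨k, hk⟩ := h b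
  exact le_trans (iE_le_iE.mpr hk) (wsum_le_supSigma π k)

lemma infSigma_eq_bot (π : G.Path) (h : ∀ b : ℤ, ∃ k, π.wsum k ≤ b) :
    G.infSigma ∅ π = ⊥ := by
  apply eq_bot_of_le_all
  intro b
  obtain ⟨k, hk⟩ := h b
  exact le_trans (infSigma_le_wsum π k) (iE_le_iE.mpr hk)

lemma infSigma_intbot (π : G.Path) : IsIntBot (G.infSigma ∅ π) := by
  by_cases h : ∃ b : ℤ, ∀ k, b ≤ π.wsum k
  · obtain ⟨b, hb⟩ := h
    obtain ⟨lb, ⟨k0, hk0⟩, hlb⟩ := Int.exists_least_of_bdd (P := fun z => ∃ k, π.wsum k = z)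
      ⟨b, fun z hz => by obtain ⟨k, hk⟩ := hz; exact hk ▸ hb k⟩ ⟨π.wsum 0, 0, rfl⟩
    right
    refine ⟨lb, le_antisymm ?_ ?_⟩
    · exact hk0 ▸ infSigma_le_wsum π k0
    · exact le_infSigma π (fun k => hlb _ ⟨k, rfl⟩)
  · left
    push_neg at h
    exact infSigma_eq_bot π (fun b => by obtain ⟨k, hk⟩ := h b; exact ⟨k, by omega⟩)

/-- a sup of nonpositive integers-or-bot is an integer or bot -/
lemma isIntBot_iSup {ι : Sort*} [Nonempty ι] {s : ι → EReal}
    (hint : ∀ i, IsIntBot (s i)) (hle : ∀ i, s i ≤ 0) : IsIntBot (⨆ i, s i) := by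
  by_cases h : ∀ i, s i = ⊥
  · left
    simp [h]
  · push_neg at h
    obtain ⟨i0, hi0⟩ := h
    obtain ⟨m0, hm0⟩ := (hint i0).resolve_left hi0
    obtain ⟨g, ⟨ig, hig⟩, hg⟩ := Int.exists_greatest_of_bdd (P := fun z => ∃ i, s i = iE z)
      ⟨0, fun z hz => by
        obtain ⟨i, hi⟩ := hz
        have := hle i
        rw [hi, ← iE_zero, iE_le_iE] at this
        exact this⟩ ⟨m0, i0, hm0⟩
    right
    refine ⟨g, le_antisymm ?_ ?_⟩
    · refine iSup_le (fun i => ?_)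
      rcases hint i with hb | ⟨m, hm⟩
      · exact hb ▸ bot_le
      · rw [hm, iE_le_iE]
        exact hg _ ⟨i, hm⟩
    · exact hig ▸ le_iSup s ig

lemma sval_infSigma_intbot (σ : V → V) (hσ : G.Legal σ) (v : V) :
    IsIntBot (G.sval (G.infSigma ∅) σ v) := by
  have : Nonempty {π : G.Path // π.vert 0 = v ∧ π.ConsMin σ} := nonempty_playFrom hσ v
  exact isIntBot_iSup (fun π => infSigma_intbot π.1) (fun π => infSigma_nonpos π.1)

lemma minVal_infSigma_intbot [Finite V] (v : V) :
    IsIntBot (G.minVal (G.infSigma ∅) v) := by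
  obtain ⟨σ, hσ, h⟩ := exists_attaining_strat (G.infSigma ∅) v
  rw [h]
  exact sval_infSigma_intbot σ hσ v

lemma minVal_infSigma_nonpos (v : V) : G.minVal (G.infSigma ∅) v ≤ 0 := by
  obtain ⟨σ, hσ⟩ := (inferInstance : Nonempty {σ : V → V // G.Legal σ})
  refine le_trans (minVal_le_sval _ hσ v) (sval_le _ _ (fun π _ _ => infSigma_nonpos π))

end Values

end MPGame
namespace MPGame

variable {V : Type*}

section MPBounds

variable {G : MPGame V}

lemma MP_pos_of_arith (π : G.Path) {i L : ℕ} {s c : ℤ} (hL : 0 < L) (hc : 0 < c)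
    (har : ∀ m : ℕ, π.wsum (i + m * L) = s + m * c) : 0 < MP π := by
  set x : ℝ := (c : ℝ) / (2 * L) with hxdef
  have hx : 0 < x := by positivity
  have hfreq : ∃ᶠ k in Filter.atTop, (x : EReal) ≤ (((π.wsum k : ℝ) / (k : ℝ)) : EReal) := by
    rw [Filter.frequently_atTop]
    intro N
    set m : ℕ := max (max N 1) ⌈((c : ℝ) * i - 2 * L * s) / ((c : ℝ) * L)⌉₊ with hmdef
    have hm1 : 1 ≤ m := le_trans (le_max_right N 1) (le_max_left _ _)
    have hmN : N ≤ m := le_trans (le_max_left N 1) (le_max_left _ _)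
    have hmM : ((c : ℝ) * i - 2 * L * s) / ((c : ℝ) * L) ≤ m := by
      refine le_trans (Nat.le_ceil _) ?_
      have h' : (⌈((c : ℝ) * i - 2 * L * s) / ((c : ℝ) * L)⌉₊ : ℕ) ≤ m := le_max_right _ _
      exact_mod_cast h'
    refine ⟨i + m * L, le_trans hmN (le_trans (Nat.le_mul_of_pos_right m hL)
      (Nat.le_add_left _ _)), ?_⟩
    rw [har m, ← EReal.coe_div, EReal.coe_le_coe_iff]
    have hd1 : (0 : ℝ) < 2 * L := by positivity
    have hd2 : (0 : ℝ) < ((i + m * L : ℕ) : ℝ) := by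
      have : 1 ≤ i + m * L := le_trans hm1 (le_trans (Nat.le_mul_of_pos_right m hL)
        (Nat.le_add_left _ _))
      exact_mod_cast this
    rw [hxdef, div_le_div_iff₀ hd1 hd2]
    have hclpos : (0 : ℝ) < (c : ℝ) * L := by positivity
    have hm' : (c : ℝ) * i - 2 * L * s ≤ m * ((c : ℝ) * L) := by
      rw [div_le_iff₀ hclpos] at hmM
      exact hmM
    push_cast
    nlinarith [hm']
  have hpos : (0 : EReal) < (x : EReal) := by exact_mod_cast hx
  exact lt_of_lt_of_le hpos (Filter.le_limsup_of_frequently_le hfreq)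

lemma MP_le_of_linear (π : G.Path) {C c : ℝ} (hc : 0 < c)
    (hb : ∀ k : ℕ, (π.wsum k : ℝ) ≤ C - k * c) : MP π ≤ ((-(c / 2) : ℝ) : EReal) := by
  refine Filter.limsup_le_of_le (by isBoundedDefault) ?_
  rw [Filter.eventually_atTop]
  refine ⟨max 1 ⌈(2 * max C 0) / c⌉₊, fun k hk => ?_⟩
  have hk1 : 1 ≤ k := le_trans (le_max_left _ _) hk
  have hkpos : (0 : ℝ) < (k : ℝ) := by exact_mod_cast hk1
  have hk2 : (2 * max C 0) / c ≤ (k : ℝ) := by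
    refine le_trans (Nat.le_ceil _) ?_
    exact_mod_cast Nat.cast_le.mpr (le_trans (le_max_right _ _) hk)
  rw [← EReal.coe_div, EReal.coe_le_coe_iff, div_le_iff₀ hkpos]
  have h2 : 2 * max C 0 ≤ (k : ℝ) * c := by
    rw [div_le_iff₀ hc] at hk2
    exact hk2
  have h3 : C ≤ max C 0 := le_max_left _ _
  have := hb k
  nlinarith

end MPBounds

section Decomp

variable [Fintype V] {G : MPGame V}

/-- Min can be forced (against σ) into a strictly positive repeat from u -/
def PosRep (G : MPGame V) (σ : V → V) (u : V) : Prop :=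
  ∃ π : G.Path, π.vert 0 = u ∧ π.ConsMin σ ∧
    ∃ i j, i < j ∧ π.vert j = π.vert i ∧ π.wsum i + 1 ≤ π.wsum j

/-- weight bound -/
noncomputable def Wbd (G : MPGame V) : ℤ :=
  ((Finset.univ : Finset (V × V)).sup fun p => (G.w p.1 p.2).toNat : ℕ)

lemma Wbd_nonneg (G : MPGame V) : 0 ≤ G.Wbd := Int.natCast_nonneg _

lemma w_le_Wbd (G : MPGame V) (x y : V) : G.w x y ≤ G.Wbd := by
  refine le_trans (Int.self_le_toNat _) ?_
  have h : (G.w x y).toNat ≤ (Finset.univ : Finset (V × V)).sup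
      (fun p => (G.w p.1 p.2).toNat) :=
    Finset.le_sup (f := fun p : V × V => (G.w p.1 p.2).toNat) (Finset.mem_univ (x, y))
  unfold Wbd
  exact_mod_cast h

lemma wsum_le_linear (π : G.Path) (k : ℕ) : π.wsum k ≤ k * G.Wbd := by
  induction k with
  | zero => simp [Path.wsum_zero]
  | succ k ih =>
      rw [Path.wsum_succ]
      have := G.w_le_Wbd (π.vert k) (π.vert (k + 1))
      push_cast
      linarith

/-- If from u, against σ, there is no strictly positive repeat, then all partial sums
decrease linearly. -/
lemma decomp (hz : G.NoZeroCycle) {σ : V → V} {u : V} (hnp : ¬ G.PosRep σ u) :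
    ∀ (k : ℕ) (π : G.Path), π.vert 0 = u → π.ConsMin σ →
      (Fintype.card V : ℤ) * π.wsum k + k ≤
        (Fintype.card V : ℤ) * ((Fintype.card V : ℤ) * G.Wbd + 1) := by
  intro k
  induction k using Nat.strong_induction_on with
  | _ k IH =>
    intro π h0 hc
    set n : ℕ := Fintype.card V with hn
    rcases le_or_gt k n with hk | hk
    · have h1 : π.wsum k ≤ k * G.Wbd := wsum_le_linear π k
      have h2 : (k : ℤ) * G.Wbd ≤ n * G.Wbd := by
        have := G.Wbd_nonneg
        have hkn : (k : ℤ) ≤ n := by exact_mod_cast hk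
        nlinarith
      have hn1 : (1 : ℤ) ≤ n ∨ k = 0 := by
        rcases Nat.eq_zero_or_pos k with h | h
        · right; exact h
        · left
          have : 1 ≤ n := le_trans h hk
          exact_mod_cast this
      rcases hn1 with hn1 | rfl
      · have hkn : (k : ℤ) ≤ n := by exact_mod_cast hk
        nlinarith [G.Wbd_nonneg]
      · rw [π.wsum_zero]
        have h1 : (0 : ℤ) ≤ (n : ℤ) * G.Wbd := mul_nonneg (Int.natCast_nonneg _) G.Wbd_nonneg
        have h2 : (0 : ℤ) ≤ (n : ℤ) * ((n : ℤ) * G.Wbd + 1) :=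
          mul_nonneg (Int.natCast_nonneg _) (by linarith)
        push_cast
        linarith
    · -- find a repeat among the first n+1 vertices
      have hcard : Fintype.card V < Fintype.card (Fin (n + 1)) := by
        simp [hn]
      obtain ⟨a, b, hab, heq⟩ := Fintype.exists_ne_map_eq_of_card_lt
        (fun t : Fin (n + 1) => π.vert t) hcard
      have key : ∀ i j : ℕ, i < j → j < n + 1 → π.vert i = π.vert j →
          (n : ℤ) * π.wsum k + k ≤ (n : ℤ) * ((n : ℤ) * G.Wbd + 1) := by
        intro i j hij hjn heq'
        have hv : π.vert j = π.vert i := heq'.symm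
        have hne : π.wsum i ≠ π.wsum j := hz π i j hij heq'
        have hle : ¬ (π.wsum i + 1 ≤ π.wsum j) := fun h =>
          hnp ⟨π, h0, hc, i, j, hij, heq'.symm, h⟩
        have hcneg : π.wsum j - π.wsum i ≤ -1 := by omega
        set π' := π.splice i j hij hv with hπ'
        have h0' : π'.vert 0 = u := by rw [hπ', π.splice_vert_zero, h0]
        have hc' : π'.ConsMin σ := π.splice_consMin i j hij hv hc
        have hw : π'.wsum (i + (k - j)) = π.wsum i - π.wsum j + π.wsum (j + (k - j)) :=
          π.splice_wsum i j hij hv (k - j)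
        have hjk : j ≤ k := by omega
        rw [show j + (k - j) = k by omega, show i + (k - j) = k - (j - i) by omega] at hw
        have hlt : k - (j - i) < k := by omega
        have := IH (k - (j - i)) hlt π' h0' hc'
        rw [hw] at this
        have hLn : ((j : ℤ) - i) ≤ (n : ℤ) := by
          have : j ≤ n := by omega
          push_cast
          omega
        have hkL : ((k - (j - i) : ℕ) : ℤ) = (k : ℤ) - (j - i) := by
          push_cast [Nat.cast_sub hjk]
          omega
        rw [hkL] at this
        have hnn : (0 : ℤ) ≤ (n : ℤ) := Int.natCast_nonneg _
        nlinarith [this, hcneg, hLn, hnn]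
      rcases lt_or_gt_of_ne (fun h : (a : ℕ) = (b : ℕ) => hab (Fin.ext h)) with hab' | hab'
      · exact key a b hab' b.2 heq
      · exact key b a hab' a.2 heq.symm

end Decomp

end MPGame
namespace MPGame

variable {V : Type*}

section Dicho

variable [Fintype V] {G : MPGame V}

lemma PosRep.pump {σ : V → V} {u : V} (h : G.PosRep σ u) :
    ∃ π : G.Path, π.vert 0 = u ∧ π.ConsMin σ ∧ (∀ b : ℤ, ∃ k, b ≤ π.wsum k) ∧ 0 < MP π := by
  obtain ⟨π, h0, hc, i, j, hij, hv, hw⟩ := h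
  refine ⟨π.pump i j hij hv, by rw [π.pump_vert_zero, h0], π.pump_consMin i j hij hv hc,
    ?_, MP_pos_of_arith _ (by omega) (by omega : 0 < π.wsum j - π.wsum i)
      (π.pump_wsum i j hij hv)⟩
  intro b
  set m := (b - π.wsum i).toNat with hm
  have hm1 : b - π.wsum i ≤ (m : ℤ) := Int.self_le_toNat _
  have h1c : 1 ≤ π.wsum j - π.wsum i := by omega
  have h2 : (m : ℤ) * 1 ≤ (m : ℤ) * (π.wsum j - π.wsum i) :=
    mul_le_mul_of_nonneg_left h1c (Int.natCast_nonneg _)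
  refine ⟨i + m * (j - i), ?_⟩
  rw [π.pump_wsum i j hij hv m]
  linarith

lemma posRep_of_bounded_below (hz : G.NoZeroCycle) {σ : V → V} {u : V} {π : G.Path}
    (h0 : π.vert 0 = u) (hc : π.ConsMin σ) {b : ℤ} (hb : ∀ k, b ≤ π.wsum k) :
    G.PosRep σ u := by
  obtain ⟨x, hx⟩ := Finite.exists_infinite_fiber π.vert
  have hxinf : (π.vert ⁻¹' {x}).Infinite := Set.infinite_coe_iff.mp hx
  obtain ⟨i0, hi0⟩ := hxinf.nonempty
  set S' : Set ℕ := π.vert ⁻¹' {x} ∩ Set.Ioi i0 with hS'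
  have hS'inf : S'.Infinite := by
    refine Set.Infinite.mono ?_ (hxinf.diff (Set.finite_Iic i0))
    intro k hk
    simp only [Set.mem_diff, Set.mem_Iic, not_le] at hk
    exact ⟨hk.1, hk.2⟩
  -- if all wsum on S' were ≤ wsum i0, S' would be finite
  by_contra hnp
  apply hS'inf
  have hinj : Set.InjOn (fun k => π.wsum k) S' := by
    intro a ha b' hb' hab
    by_contra hne
    rcases lt_or_gt_of_ne hne with h | h
    · exact hz π a b' h (by
        have h1 : π.vert a = x := ha.1
        have h2 : π.vert b' = x := hb'.1
        rw [h1, h2]) hab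
    · exact hz π b' a h (by
        have h1 : π.vert a = x := ha.1
        have h2 : π.vert b' = x := hb'.1
        rw [h1, h2]) hab.symm
  have hmap : Set.MapsTo (fun k => π.wsum k) S' (Set.Icc b (π.wsum i0)) := by
    intro k hk
    refine ⟨hb k, ?_⟩
    by_contra hgt
    push_neg at hgt
    refine hnp ⟨π, h0, hc, i0, k, hk.2, ?_, by omega⟩
    have h1 : π.vert i0 = x := hi0
    have h2 : π.vert k = x := hk.1
    rw [h1, h2]
  exact Set.Finite.of_finite_image ((Set.finite_Icc b (π.wsum i0)).subset
    (Set.image_subset_iff.mpr hmap)) hinj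

lemma sval_MP_neg (hz : G.NoZeroCycle) {σ : V → V} {u : V} (hσ : G.Legal σ)
    (hnp : ¬ G.PosRep σ u) : G.sval MP σ u < 0 := by
  have : Nonempty V := ⟨u⟩
  set n : ℕ := Fintype.card V with hn
  have hn1 : 1 ≤ n := Fintype.card_pos
  have hnpos : (0 : ℝ) < n := by exact_mod_cast hn1
  have hcpos : (0 : ℝ) < 1 / n := by positivity
  set D : ℤ := (n : ℤ) * ((n : ℤ) * G.Wbd + 1) with hD
  have hbound : ∀ π : G.Path, π.vert 0 = u → π.ConsMin σ →
      MP π ≤ ((-(1 / (n : ℝ) / 2) : ℝ) : EReal) := by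
    intro π h0 hc
    refine MP_le_of_linear π (C := (D : ℝ) / n) hcpos ?_
    intro k
    have hint := decomp hz hnp k π h0 hc
    have hR : (n : ℝ) * (π.wsum k : ℝ) + (k : ℝ) ≤ (D : ℝ) := by
      exact_mod_cast hint
    have h1 : (π.wsum k : ℝ) ≤ ((D : ℝ) - k) / n := by
      rw [le_div_iff₀ hnpos]
      linarith
    have h2 : ((D : ℝ) - k) / n = (D : ℝ) / n - k * (1 / n) := by
      field_simp
    linarith [h1, h2.le, h2.ge]
  refine lt_of_le_of_lt (sval_le MP σ (fun π h0 hc => hbound π h0 hc)) ?_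
  have hlt : (-(1 / (n : ℝ) / 2) : ℝ) < 0 := by
    have : (0:ℝ) < 1 / (n:ℝ) / 2 := by positivity
    linarith
  exact_mod_cast hlt

end Dicho

end MPGame
namespace MPGame

variable {V : Type*}

section Dicho2

variable [Fintype V] {G : MPGame V}

lemma MPval_def (u : V) : G.MPval u = G.minVal MP u := rfl

lemma Mval_dichotomy (hz : G.NoZeroCycle) (u : V) : G.MPval u < 0 ∨ 0 < G.MPval u := by
  obtain ⟨σ, hσ, hatt⟩ := exists_attaining_strat (G := G) MP u
  by_cases hp : G.PosRep σ u
  · right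
    obtain ⟨π, h0, hc, _, hMP⟩ := hp.pump
    rw [MPval_def, hatt]
    exact lt_of_lt_of_le hMP (le_sval MP σ h0 hc)
  · left
    rw [MPval_def, hatt]
    exact sval_MP_neg hz hσ hp

lemma Mval_not_both {u : V} (h1 : G.MPval u < 0) (h2 : 0 < G.MPval u) : False :=
  absurd (lt_trans h2 h1) (lt_irrefl _)

lemma Mval_neg_of_bounded (hz : G.NoZeroCycle) {σ : V → V} {u : V} {B : ℤ} (hσ : G.Legal σ)
    (hB : ∀ π : G.Path, π.vert 0 = u → π.ConsMin σ → ∀ k, π.wsum k ≤ B) :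
    G.MPval u < 0 := by
  have hnp : ¬ G.PosRep σ u := by
    intro h
    obtain ⟨π, h0, hc, hub, _⟩ := h.pump
    obtain ⟨k, hk⟩ := hub (B + 1)
    have := hB π h0 hc k
    omega
  exact lt_of_le_of_lt (minVal_le_sval MP hσ u) (sval_MP_neg hz hσ hnp)

lemma Mval_pos_of_posrep {u : V} (h : ∀ σ : V → V, G.Legal σ → G.PosRep σ u) :
    0 < G.MPval u := by
  obtain ⟨σ, hσ, hatt⟩ := exists_attaining_strat (G := G) MP u
  obtain ⟨π, h0, hc, _, hMP⟩ := (h σ hσ).pump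
  rw [MPval_def, hatt]
  exact lt_of_lt_of_le hMP (le_sval MP σ h0 hc)

/-- if the infΣ value is not ⊥ then the MP value is positive -/
lemma Mval_pos_of_inf_ne_bot (hz : G.NoZeroCycle) {u : V}
    (h : G.minVal (G.infSigma ∅) u ≠ ⊥) : 0 < G.MPval u := by
  refine Mval_pos_of_posrep (fun σ hσ => ?_)
  obtain ⟨m, hm⟩ := (minVal_infSigma_intbot u).resolve_left h
  have hle : iE m ≤ G.sval (G.infSigma ∅) σ u := hm ▸ minVal_le_sval _ hσ u
  have : iE (m - 1) < G.sval (G.infSigma ∅) σ u := lt_of_lt_of_le (iE_lt_iE.mpr (by omega)) hle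
  rw [sval, lt_iSup_iff] at this
  obtain ⟨⟨π, h0, hc⟩, hπ⟩ := this
  refine posRep_of_bounded_below hz h0 hc (b := m) (fun k => ?_)
  have := lt_of_lt_of_le hπ (infSigma_le_wsum π k)
  rw [iE_lt_iE] at this
  omega

end Dicho2

end MPGame
namespace MPGame

variable {V : Type*}

section NSide

variable [Fintype V] {G : MPGame V} {φ : V → ℤ}

lemma no_banded_play (hz : G.NoZeroCycle) (θ : G.Path) (lo : ℤ) (hi : V → ℤ)
    (h : ∀ k, lo ≤ θ.wsum k ∧ θ.wsum k ≤ hi (θ.vert k)) : False := by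
  obtain ⟨x, hx⟩ := Finite.exists_infinite_fiber θ.vert
  have hxinf : (θ.vert ⁻¹' {x}).Infinite := Set.infinite_coe_iff.mp hx
  have hinj : Set.InjOn (fun k => θ.wsum k) (θ.vert ⁻¹' {x}) := by
    intro a ha b hb hab
    by_contra hne
    rcases lt_or_gt_of_ne hne with hlt | hlt
    · exact hz θ a b hlt (ha.trans hb.symm) hab
    · exact hz θ b a hlt (hb.trans ha.symm) hab.symm
  have hmap : Set.MapsTo (fun k => θ.wsum k) (θ.vert ⁻¹' {x}) (Set.Icc lo (hi x)) := by
    intro k hk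
    have := h k
    have hkx : θ.vert k = x := hk
    exact ⟨this.1, hkx ▸ this.2⟩
  exact hxinf (Set.Finite.of_finite_image ((Set.finite_Icc lo (hi x)).subset
    (Set.image_subset_iff.mpr hmap)) hinj)

/-- Bellman closure of the negative region N, via the supΣ values -/
lemma F2 (hz : G.NoZeroCycle)
    (hφ : ∀ v, (G.MPval v < 0 → ((φ v : ℝ) : EReal) = G.supSigmaVal ∅ v) ∧
               (0 < G.MPval v → ((φ v : ℝ) : EReal) = G.infSigmaVal ∅ v))
    {v : V} (hN : G.MPval v < 0) :
    (G.IsMin v → ∃ v', G.E v v' ∧ G.w v v' + φ v' ≤ φ v ∧ G.MPval v' < 0) ∧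
    (¬ G.IsMin v → ∀ v', G.E v v' → G.w v v' + φ v' ≤ φ v ∧ G.MPval v' < 0) := by
  obtain ⟨σ, hσ, hatt⟩ := exists_attaining_strat (G := G) (G.supSigma ∅) v
  have hv : iE (φ v) = G.sval (G.supSigma ∅) σ v := by
    rw [← hatt]
    exact (hφ v).1 hN
  have key : ∀ v', G.E v v' → (G.IsMin v → v' = σ v) →
      G.w v v' + φ v' ≤ φ v ∧ G.MPval v' < 0 := by
    intro v' hE hmin
    have hbd : ∀ χ : G.Path, χ.vert 0 = v' → χ.ConsMin σ → ∀ k,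
        χ.wsum k ≤ φ v - G.w v v' := by
      intro χ hχ0 hχc k
      have hE' : G.E v (χ.vert 0) := hχ0 ▸ hE
      have hπc : (χ.cons v hE').ConsMin σ :=
        χ.cons_consMin v hE' hχc (fun hm => by rw [hχ0]; exact hmin hm)
      have hb : iE ((χ.cons v hE').wsum (k + 1)) ≤ iE (φ v) := by
        rw [hv]
        exact le_trans (wsum_le_supSigma _ (k + 1)) (le_sval _ σ rfl hπc)
      rw [iE_le_iE, Path.cons_wsum, hχ0] at hb
      omega
    have hN' : G.MPval v' < 0 := Mval_neg_of_bounded hz hσ hbd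
    have hv' : iE (φ v') = G.minVal (G.supSigma ∅) v' := (hφ v').1 hN'
    have hfin : G.minVal (G.supSigma ∅) v' ≤ iE (φ v - G.w v v') :=
      le_trans (minVal_le_sval _ hσ v')
        (sval_le _ σ (fun χ h0 hc => supSigma_le χ (hbd χ h0 hc)))
    rw [← hv', iE_le_iE] at hfin
    exact ⟨by omega, hN'⟩
  exact ⟨fun _ => ⟨σ v, hσ v, key (σ v) (hσ v) (fun _ => rfl)⟩,
    fun hm v' hE => key v' hE (fun h => absurd h hm)⟩

variable (G φ)

open Classical in
/-- canonical good move in the N region -/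
noncomputable def witN (hz : G.NoZeroCycle)
    (hφ : ∀ v, (G.MPval v < 0 → ((φ v : ℝ) : EReal) = G.supSigmaVal ∅ v) ∧
               (0 < G.MPval v → ((φ v : ℝ) : EReal) = G.infSigmaVal ∅ v)) (v : V) : V :=
  if h : G.MPval v < 0 ∧ G.IsMin v then Classical.choose ((F2 hz hφ h.1).1 h.2)
  else Classical.choose (G.sinkless v)

variable {G φ}

variable (hz : G.NoZeroCycle)
  (hφ : ∀ v, (G.MPval v < 0 → ((φ v : ℝ) : EReal) = G.supSigmaVal ∅ v) ∧
             (0 < G.MPval v → ((φ v : ℝ) : EReal) = G.infSigmaVal ∅ v))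
include hz hφ

lemma witN_edge (v : V) : G.E v (witN G φ hz hφ v) := by
  unfold witN
  split
  case isTrue h => exact (Classical.choose_spec ((F2 hz hφ h.1).1 h.2)).1
  case isFalse h => exact Classical.choose_spec (G.sinkless v)

lemma witN_legal : G.Legal (witN G φ hz hφ) := fun v => witN_edge hz hφ v

lemma witN_spec {v : V} (h : G.MPval v < 0) (hm : G.IsMin v) :
    G.w v (witN G φ hz hφ v) + φ (witN G φ hz hφ v) ≤ φ v ∧
      G.MPval (witN G φ hz hφ v) < 0 := by
  unfold witN
  rw [dif_pos ⟨h, hm⟩]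
  exact (Classical.choose_spec ((F2 hz hφ h).1 hm)).2

/-- plays that follow witN inside N stay in N and dive to -∞ -/
lemma dive {θ : G.Path} (h0 : G.MPval (θ.vert 0) < 0)
    (hw : ∀ k, G.MPval (θ.vert k) < 0 → G.IsMin (θ.vert k) →
      θ.vert (k + 1) = witN G φ hz hφ (θ.vert k)) :
    (∀ k, G.MPval (θ.vert k) < 0 ∧ θ.wsum k ≤ φ (θ.vert 0) - φ (θ.vert k)) ∧
    (∀ b : ℤ, ∃ k, θ.wsum k < b) := by
  have part1 : ∀ k, G.MPval (θ.vert k) < 0 ∧ θ.wsum k ≤ φ (θ.vert 0) - φ (θ.vert k) := by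
    intro k
    induction k with
    | zero => exact ⟨h0, by rw [θ.wsum_zero]; omega⟩
    | succ k ih =>
        obtain ⟨hk, hwk⟩ := ih
        have hstep : G.w (θ.vert k) (θ.vert (k + 1)) + φ (θ.vert (k + 1)) ≤ φ (θ.vert k) ∧
            G.MPval (θ.vert (k + 1)) < 0 := by
          by_cases hm : G.IsMin (θ.vert k)
          · have hnext := hw k hk hm
            have := witN_spec hz hφ hk hm
            rw [← hnext] at this
            exact this
          · exact (F2 hz hφ hk).2 hm (θ.vert (k + 1)) (θ.adj k)
        refine ⟨hstep.2, ?_⟩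
        rw [θ.wsum_succ]
        omega
  refine ⟨part1, fun b => ?_⟩
  by_contra hall
  push_neg at hall
  exact no_banded_play hz θ b (fun x => φ (θ.vert 0) - φ x)
    (fun k => ⟨hall k, (part1 k).2⟩)

/-- on N, the infΣ value is ⊥ -/
lemma Ival_bot_of_N {v : V} (hN : G.MPval v < 0) :
    G.minVal (G.infSigma ∅) v = ⊥ := by
  refine le_bot_iff.mp (le_trans (minVal_le_sval _ (witN_legal hz hφ) v)
    (sval_le _ _ (fun θ h0 hc => ?_)))
  have hdive := dive hz hφ (h0 ▸ hN : G.MPval (θ.vert 0) < 0)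
    (fun k _ hm => hc k hm)
  rw [infSigma_eq_bot θ (fun b => by obtain ⟨k, hk⟩ := hdive.2 b; exact ⟨k, by omega⟩)]

end NSide

end MPGame
namespace MPGame

variable {V : Type*}

section Extraction

lemma iE_add (a b : ℤ) : iE (a + b) = iE a + iE b := by
  unfold iE
  push_cast
  rfl

lemma iE_min (a b : ℤ) : iE (min a b) = min (iE a) (iE b) := by
  rcases le_total a b with h | h
  · rw [min_eq_left h, min_eq_left (iE_le_iE.mpr h)]
  · rw [min_eq_right h, min_eq_right (iE_le_iE.mpr h)]

variable [Fintype V] {G : MPGame V} {φ : V → ℤ}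

lemma nonempty_succ (G : MPGame V) (v : V) : Nonempty {y // G.E v y} := by
  obtain ⟨y, hy⟩ := G.sinkless v
  exact ⟨⟨y, hy⟩⟩

/-- a best first move for the infΣ value -/
noncomputable def argminI (G : MPGame V) [Fintype V] (v : V) : V :=
  haveI := nonempty_succ G v
  (Classical.choose (Finite.exists_min
    (fun y : {y // G.E v y} => min 0 (iE (G.w v y.1) + G.minVal (G.infSigma ∅) y.1)))).1

lemma argminI_edge (v : V) : G.E v (G.argminI v) := by
  haveI := nonempty_succ G v
  exact (Classical.choose (Finite.exists_min
    (fun y : {y // G.E v y} => min 0 (iE (G.w v y.1) + G.minVal (G.infSigma ∅) y.1)))).2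

lemma argminI_min (v y : V) (hE : G.E v y) :
    min 0 (iE (G.w v (G.argminI v)) + G.minVal (G.infSigma ∅) (G.argminI v)) ≤
      min 0 (iE (G.w v y) + G.minVal (G.infSigma ∅) y) := by
  haveI := nonempty_succ G v
  exact Classical.choose_spec (Finite.exists_min
    (fun y : {y // G.E v y} => min 0 (iE (G.w v y.1) + G.minVal (G.infSigma ∅) y.1))) ⟨y, hE⟩

variable (G φ)

open Classical in
/-- the globally optimal strategy for infΣ -/
noncomputable def sigmahat (hz : G.NoZeroCycle)
    (hφ : ∀ v, (G.MPval v < 0 → ((φ v : ℝ) : EReal) = G.supSigmaVal ∅ v) ∧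
               (0 < G.MPval v → ((φ v : ℝ) : EReal) = G.infSigmaVal ∅ v)) (v : V) : V :=
  if G.MPval v < 0 then witN G φ hz hφ v else G.argminI v

variable {G φ}

variable (hz : G.NoZeroCycle)
  (hφ : ∀ v, (G.MPval v < 0 → ((φ v : ℝ) : EReal) = G.supSigmaVal ∅ v) ∧
             (0 < G.MPval v → ((φ v : ℝ) : EReal) = G.infSigmaVal ∅ v))
include hz hφ

lemma sigmahat_legal : G.Legal (sigmahat G φ hz hφ) := by
  intro v
  unfold sigmahat
  split
  · exact witN_edge hz hφ v
  · exact argminI_edge v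

lemma sigmahat_of_neg {v : V} (h : G.MPval v < 0) :
    sigmahat G φ hz hφ v = witN G φ hz hφ v := if_pos h

lemma sigmahat_of_not_neg {v : V} (h : ¬ G.MPval v < 0) :
    sigmahat G φ hz hφ v = G.argminI v := if_neg h

/-- one-step inequality against arbitrary strategies -/
lemma step_ge {σ : V → V} (hσ : G.Legal σ) (v y : V) (hE : G.E v y)
    (hy : G.IsMin v → y = σ v) :
    min 0 (iE (G.w v y) + G.minVal (G.infSigma ∅) y) ≤ G.sval (G.infSigma ∅) σ v := by
  rcases minVal_infSigma_intbot y with hb | ⟨m, hm⟩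
  · rw [hb, EReal.add_bot, min_eq_right bot_le]
    exact bot_le
  · rw [hm]
    have h1 : iE (m - 1) < G.sval (G.infSigma ∅) σ y :=
      lt_of_lt_of_le (iE_lt_iE.mpr (by omega)) (hm ▸ minVal_le_sval _ hσ y)
    rw [sval, lt_iSup_iff] at h1
    obtain ⟨⟨χ, hχ0, hχc⟩, hχ⟩ := h1
    have hwb : ∀ k, m ≤ χ.wsum k := by
      intro k
      have := lt_of_lt_of_le hχ (infSigma_le_wsum χ k)
      rw [iE_lt_iE] at this
      omega
    have hE' : G.E v (χ.vert 0) := hχ0 ▸ hE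
    have hπc : (χ.cons v hE').ConsMin σ :=
      χ.cons_consMin v hE' hχc (fun hmin => by rw [hχ0]; exact hy hmin)
    have hlow : ∀ j, min 0 (G.w v y + m) ≤ (χ.cons v hE').wsum j := by
      intro j
      cases j with
      | zero =>
          rw [Path.wsum_zero]
          exact min_le_left 0 _
      | succ j =>
          rw [Path.cons_wsum, hχ0]
          have h2 := hwb j
          have h3 : min 0 (G.w v y + m) ≤ G.w v y + m := min_le_right _ _
          omega
    calc min 0 (iE (G.w v y) + iE m) = iE (min 0 (G.w v y + m)) := by
            rw [iE_min, iE_add, iE_zero]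
      _ ≤ G.infSigma ∅ (χ.cons v hE') := le_infSigma _ hlow
      _ ≤ G.sval (G.infSigma ∅) σ v := le_sval _ σ rfl hπc

/-- the Bellman pre-fixpoint property of the infΣ value along σ-hat -/
lemma Ival_step_min {v : V} (hm : G.IsMin v) :
    min 0 (iE (G.w v (sigmahat G φ hz hφ v)) +
      G.minVal (G.infSigma ∅) (sigmahat G φ hz hφ v)) ≤ G.minVal (G.infSigma ∅) v := by
  by_cases hN : G.MPval v < 0
  · rw [sigmahat_of_neg hz hφ hN, Ival_bot_of_N hz hφ (witN_spec hz hφ hN hm).2,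
      EReal.add_bot, min_eq_right bot_le, Ival_bot_of_N hz hφ hN]
  · rw [sigmahat_of_not_neg hz hφ hN]
    refine le_minVal _ (fun σ hσ => ?_)
    refine le_trans (argminI_min v (σ v) (hσ v)) ?_
    exact step_ge hz hφ hσ v (σ v) (hσ v) (fun _ => rfl)

lemma Ival_step_max {v : V} (hm : ¬ G.IsMin v) (y : V) (hE : G.E v y) :
    min 0 (iE (G.w v y) + G.minVal (G.infSigma ∅) y) ≤ G.minVal (G.infSigma ∅) v :=
  le_minVal _ (fun σ hσ => step_ge hz hφ hσ v y hE (fun h => absurd h hm))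

lemma phi_nonpos {v : V} (hP : 0 < G.MPval v) : φ v ≤ 0 := by
  have h1 : iE (φ v) = G.minVal (G.infSigma ∅) v := (hφ v).2 hP
  have h2 := minVal_infSigma_nonpos (G := G) v
  rw [← h1, ← iE_zero, iE_le_iE] at h2
  exact h2

/-- extraction: σ-hat achieves the infΣ value from every vertex -/
lemma ext_le (v : V) (θ : G.Path) (h0 : θ.vert 0 = v) (hc : θ.ConsMin (sigmahat G φ hz hφ)) :
    G.infSigma ∅ θ ≤ G.minVal (G.infSigma ∅) v := by
  subst h0
  by_cases hNhit : ∃ T, G.MPval (θ.vert T) < 0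
  · obtain ⟨T, hT⟩ := hNhit
    have htail0 : (θ.drop T).vert 0 = θ.vert T := by rw [Path.drop_vert, Nat.add_zero]
    have hdive := dive hz hφ (θ := θ.drop T) (htail0 ▸ hT) (by
      intro k hk hmk
      have h2 := θ.drop_consMin T hc k hmk
      rw [h2, sigmahat_of_neg hz hφ hk])
    have hbot : G.infSigma ∅ θ = ⊥ := by
      refine infSigma_eq_bot θ (fun b => ?_)
      obtain ⟨k, hk⟩ := hdive.2 (b - θ.wsum T)
      refine ⟨T + k, ?_⟩
      have := θ.drop_wsum T k
      omega
    rw [hbot]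
    exact bot_le
  · push_neg at hNhit
    have hP : ∀ k, 0 < G.MPval (θ.vert k) :=
      fun k => (Mval_dichotomy hz _).resolve_left (not_lt.mpr (hNhit k))
    have hfk : ∀ k, iE (φ (θ.vert k)) = G.minVal (G.infSigma ∅) (θ.vert k) :=
      fun k => (hφ _).2 (hP k)
    by_contra hgt
    rw [not_le, ← hfk 0] at hgt
    have hall : ∀ j, φ (θ.vert 0) + 1 ≤ θ.wsum j := by
      intro j
      have := lt_of_lt_of_le hgt (infSigma_le_wsum θ j)
      rw [iE_lt_iE] at this
      omega
    have hinv : ∀ k, φ (θ.vert k) ≤ φ (θ.vert 0) - θ.wsum k := by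
      intro k
      induction k with
      | zero => rw [θ.wsum_zero]; omega
      | succ k ih =>
          have hstepE : min 0 (iE (G.w (θ.vert k) (θ.vert (k + 1))) +
              G.minVal (G.infSigma ∅) (θ.vert (k + 1))) ≤
                G.minVal (G.infSigma ∅) (θ.vert k) := by
            by_cases hmk : G.IsMin (θ.vert k)
            · have h2 := hc k hmk
              have h3 := Ival_step_min hz hφ (v := θ.vert k) hmk
              rw [← h2] at h3
              exact h3
            · exact Ival_step_max hz hφ hmk _ (θ.adj k)
          rw [← hfk k, ← hfk (k + 1), ← iE_zero, ← iE_add, ← iE_min, iE_le_iE] at hstepE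
          have hx0 : φ (θ.vert k) ≤ 0 := phi_nonpos hz hφ (hP k)
          have hwk := θ.wsum_succ k
          have hallk := hall k
          rcases le_total 0 (G.w (θ.vert k) (θ.vert (k + 1)) + φ (θ.vert (k + 1)))
            with hmin | hmin
          · rw [min_eq_left hmin] at hstepE
            omega
          · rw [min_eq_right hmin] at hstepE
            omega
    exact no_banded_play hz θ (φ (θ.vert 0) + 1) (fun x => φ (θ.vert 0) - φ x)
      (fun k => ⟨hall k, by
        show θ.wsum k ≤ φ (θ.vert 0) - φ (θ.vert k)
        have := hinv k
        omega⟩)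

/-- σ-hat attains the infΣ value everywhere -/
lemma Ival_attained (v : V) :
    G.sval (G.infSigma ∅) (sigmahat G φ hz hφ) v = G.minVal (G.infSigma ∅) v :=
  le_antisymm (sval_le _ _ (fun θ h0 hc => ext_le hz hφ v θ h0 hc))
    (minVal_le_sval _ (sigmahat_legal hz hφ) v)

end Extraction

end MPGame
namespace MPGame

variable {V : Type*}

section PSide

variable [Fintype V] {G : MPGame V} {φ : V → ℤ}

variable (hz : G.NoZeroCycle)
  (hφ : ∀ v, (G.MPval v < 0 → ((φ v : ℝ) : EReal) = G.supSigmaVal ∅ v) ∧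
             (0 < G.MPval v → ((φ v : ℝ) : EReal) = G.infSigmaVal ∅ v))
include hz hφ

/-- in P, someone has a good move (for Max vertices this is the needed witness) -/
lemma F3max {v : V} (hP : 0 < G.MPval v) :
    ∃ y, G.E v y ∧ φ v ≤ G.w v y + φ y ∧ 0 < G.MPval y := by
  have hv : iE (φ v) = G.minVal (G.infSigma ∅) v := (hφ v).2 hP
  have h1 : iE (φ v - 1) < G.sval (G.infSigma ∅) (sigmahat G φ hz hφ) v := by
    rw [Ival_attained hz hφ, ← hv]
    exact iE_lt_iE.mpr (by omega)
  rw [sval, lt_iSup_iff] at h1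
  obtain ⟨⟨θ, h0, hc⟩, hθ⟩ := h1
  have hall : ∀ j, φ v ≤ θ.wsum j := by
    intro j
    have := lt_of_lt_of_le hθ (infSigma_le_wsum θ j)
    rw [iE_lt_iE] at this
    omega
  have hE : G.E v (θ.vert 1) := by
    have := θ.adj 0
    rw [h0] at this
    simpa using this
  have hw1 : θ.wsum 1 = G.w v (θ.vert 1) := by
    have h := θ.wsum_succ 0
    rw [θ.wsum_zero, h0] at h
    simpa using h
  have htail0 : (θ.drop 1).vert 0 = θ.vert 1 := by rw [Path.drop_vert]
  have hlow : ∀ m, φ v - G.w v (θ.vert 1) ≤ (θ.drop 1).wsum m := by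
    intro m
    have h2 := θ.drop_wsum 1 m
    have h3 := hall (1 + m)
    omega
  have h4 : iE (φ v - G.w v (θ.vert 1)) ≤ G.minVal (G.infSigma ∅) (θ.vert 1) := by
    refine le_trans (le_infSigma _ hlow) ?_
    exact ext_le hz hφ (θ.vert 1) (θ.drop 1) htail0 (θ.drop_consMin 1 hc)
  have hyP : 0 < G.MPval (θ.vert 1) := by
    refine Mval_pos_of_inf_ne_bot hz ?_
    intro hb
    rw [hb] at h4
    exact absurd (lt_of_lt_of_le (bot_lt_iE _) h4) (lt_irrefl _)
  have hy2 : iE (φ (θ.vert 1)) = G.minVal (G.infSigma ∅) (θ.vert 1) := (hφ _).2 hyP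
  rw [← hy2, iE_le_iE] at h4
  exact ⟨θ.vert 1, hE, by omega, hyP⟩

/-- Min vertices in P only have edges into P -/
lemma F3minMem {v v' : V} (hP : 0 < G.MPval v) (hm : G.IsMin v) (hE : G.E v v') :
    0 < G.MPval v' := by
  classical
  by_contra h
  have hN' : G.MPval v' < 0 := (Mval_dichotomy hz v').resolve_right h
  set σ : V → V := fun x => if x = v then v' else witN G φ hz hφ x with hσdef
  have hσapp : ∀ x, σ x = if x = v then v' else witN G φ hz hφ x := fun x => by rw [hσdef]
  have hσ : G.Legal σ := by
    intro x
    rw [hσapp]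
    by_cases hx : x = v
    · rw [if_pos hx, hx]
      exact hE
    · rw [if_neg hx]
      exact witN_edge hz hφ x
  have hbot : G.sval (G.infSigma ∅) σ v ≤ ⊥ := by
    refine sval_le _ _ (fun θ h0 hc => ?_)
    have h1 : θ.vert 1 = v' := by
      have hh := hc 0 (by rw [h0]; exact hm)
      rw [h0] at hh
      simp only [Nat.zero_add] at hh
      rw [hh, hσapp, if_pos rfl]
    have htail0 : (θ.drop 1).vert 0 = v' := by rw [Path.drop_vert]; exact h1
    have hdive := dive hz hφ (θ := θ.drop 1) (htail0 ▸ hN') (by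
      intro k hk hmk
      have h2 := θ.drop_consMin 1 hc k hmk
      rw [h2, hσapp]
      have hne : (θ.drop 1).vert k ≠ v := by
        intro heq
        rw [heq] at hk
        exact Mval_not_both hk hP
      rw [if_neg hne])
    have hb : G.infSigma ∅ θ = ⊥ := by
      refine infSigma_eq_bot θ (fun b => ?_)
      obtain ⟨k, hk⟩ := hdive.2 (b - θ.wsum 1)
      refine ⟨1 + k, ?_⟩
      have := θ.drop_wsum 1 k
      omega
    rw [hb]
  have hcontra : G.minVal (G.infSigma ∅) v ≤ ⊥ := le_trans (minVal_le_sval _ hσ v) hbot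
  have hveq : iE (φ v) = G.minVal (G.infSigma ∅) v := (hφ v).2 hP
  rw [← hveq] at hcontra
  exact absurd (lt_of_lt_of_le (bot_lt_iE _) hcontra) (lt_irrefl _)

/-- Min Bellman inequality on P: every edge from a Min vertex of P increases φ -/
lemma F3minIneq {v v' : V} (hP : 0 < G.MPval v) (hP' : 0 < G.MPval v')
    (hm : G.IsMin v) (hE : G.E v v') : φ v ≤ G.w v v' + φ v' := by
  classical
  by_cases hvv : v' = v
  · -- self-loop: its weight must be positive
    subst hvv
    set π : G.Path := ⟨fun _ => v', fun _ => hE⟩ with hπdef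
    have hwsum : ∀ k, π.wsum k = k * G.w v' v' := by
      intro k
      induction k with
      | zero => rw [π.wsum_zero]; omega
      | succ k ih =>
          rw [π.wsum_succ, ih]
          push_cast
          ring
    have hne : G.w v' v' ≠ 0 := by
      have := hz π 0 1 (by omega) rfl
      rw [hwsum 0, hwsum 1] at this
      omega
    rcases lt_or_gt_of_ne hne with hneg | hpos
    · exfalso
      set σ : V → V := fun x => if x = v' then v' else witN G φ hz hφ x with hσdef
      have hσapp : ∀ x, σ x = if x = v' then v' else witN G φ hz hφ x := fun x => by rw [hσdef]
      have hσ : G.Legal σ := by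
        intro x
        rw [hσapp]
        by_cases hx : x = v'
        · rw [if_pos hx, hx]
          exact hE
        · rw [if_neg hx]
          exact witN_edge hz hφ x
      have hbot : G.sval (G.infSigma ∅) σ v' ≤ ⊥ := by
        refine sval_le _ _ (fun θ h0 hc => ?_)
        have hconst : ∀ k, θ.vert k = v' := by
          intro k
          induction k with
          | zero => exact h0
          | succ k ih =>
              have hh := hc k (by rw [ih]; exact hm)
              rw [ih] at hh
              rw [hh, hσapp, if_pos rfl]
        have hws : ∀ k, θ.wsum k = k * G.w v' v' := by
          intro k
          induction k with
          | zero => rw [θ.wsum_zero]; omega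
          | succ k ih =>
              rw [θ.wsum_succ, ih, hconst k, hconst (k + 1)]
              push_cast
              ring
        have hb : G.infSigma ∅ θ = ⊥ := by
          refine infSigma_eq_bot θ (fun b => ?_)
          refine ⟨(b.natAbs + 1), ?_⟩
          rw [hws]
          have h1 : (0 : ℤ) ≤ ((b.natAbs + 1 : ℕ) : ℤ) := Int.natCast_nonneg _
          have h3 : -(b : ℤ) ≤ ((b.natAbs : ℕ) : ℤ) := by
            rcases Int.natAbs_eq b with hb' | hb' <;> omega
          have h4 : ((b.natAbs + 1 : ℕ) : ℤ) * G.w v' v' ≤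
              ((b.natAbs + 1 : ℕ) : ℤ) * (-1) :=
            mul_le_mul_of_nonneg_left (by omega) h1
          push_cast at h3 h4 ⊢
          omega
        rw [hb]
      have hcontra : G.minVal (G.infSigma ∅) v' ≤ ⊥ := le_trans (minVal_le_sval _ hσ v') hbot
      have hveq : iE (φ v') = G.minVal (G.infSigma ∅) v' := (hφ v').2 hP'
      rw [← hveq] at hcontra
      exact absurd (lt_of_lt_of_le (bot_lt_iE _) hcontra) (lt_irrefl _)
    · have := phi_nonpos hz hφ hP'
      omega
  · -- main case
    by_contra H
    push_neg at H
    obtain ⟨σ', hσ', hatt'⟩ := exists_attaining_strat (G := G) (G.infSigma ∅) v'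
    have hIv' : iE (φ v') = G.sval (G.infSigma ∅) σ' v' := by
      rw [← hatt']
      exact (hφ v').2 hP'
    set σ : V → V := fun x => if x = v then v' else σ' x with hσdef
    have hσapp : ∀ x, σ x = if x = v then v' else σ' x := fun x => by rw [hσdef]
    have hσ : G.Legal σ := by
      intro x
      rw [hσapp]
      by_cases hx : x = v
      · rw [if_pos hx, hx]
        exact hE
      · rw [if_neg hx]
        exact hσ' x
    have hφv'0 : φ v' ≤ 0 := phi_nonpos hz hφ hP'
    set B : ℕ := (-φ v').toNat with hBdef
    have hBval : (B : ℤ) = -φ v' := Int.toNat_of_nonneg (by omega)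
    have step : ∀ k : ℕ,
        (∀ θ : G.Path, θ.vert 0 = v' → θ.ConsMin σ →
          G.infSigma ∅ θ ≤ iE (φ v' + (k + 1))) →
        (∀ θ : G.Path, θ.vert 0 = v' → θ.ConsMin σ →
          G.infSigma ∅ θ ≤ iE (φ v' + k)) := by
      intro k hgk1 θ h0 hc
      by_contra hθ
      push_neg at hθ
      have hall : ∀ j, φ v' + k + 1 ≤ θ.wsum j := by
        intro j
        have := lt_of_lt_of_le hθ (infSigma_le_wsum θ j)
        rw [iE_lt_iE] at this
        omega
      by_cases hhit : ∃ T, θ.vert T = v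
      · have hT : θ.vert (Nat.find hhit) = v := Nat.find_spec hhit
        set T := Nat.find hhit with hTdef
        have hTmin : ∀ t, t < T → θ.vert t ≠ v := fun t ht => Nat.find_min hhit ht
        have hT1 : 1 ≤ T := by
          rcases Nat.eq_zero_or_pos T with hzero | hpos
          · exfalso
            rw [hzero, h0] at hT
            exact hvv hT
          · exact hpos
        have hstar : ∀ χ : G.Path, χ.vert 0 = v → χ.ConsMin σ' →
            G.infSigma ∅ χ ≤ iE (φ v' - θ.wsum T) := by
          intro χ hχ0 hχc
          have h0c : χ.vert 0 = θ.vert T := by rw [hχ0, hT]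
          have hc0 : (θ.concatAt T χ h0c).vert 0 = v' := by
            rw [θ.concatAt_vert_of_lt T χ h0c (by omega), h0]
          have hccons : (θ.concatAt T χ h0c).ConsMin σ' := by
            refine θ.concatAt_consMin T χ h0c (fun t ht hmt => ?_) hχc
            have hh := hc t hmt
            rw [hh, hσapp, if_neg (hTmin t ht)]
          have hcle : G.infSigma ∅ (θ.concatAt T χ h0c) ≤ iE (φ v') := by
            rw [hIv']
            exact le_sval _ σ' hc0 hccons
          have hex : ∃ j, (θ.concatAt T χ h0c).wsum j ≤ φ v' := by
            by_contra hno
            push_neg at hno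
            refine absurd (le_infSigma (θ.concatAt T χ h0c) (b := φ v' + 1)
              (fun j => by have := hno j; omega)) ?_
            rw [not_le]
            exact lt_of_le_of_lt hcle (iE_lt_iE.mpr (by omega))
          obtain ⟨j, hj⟩ := hex
          have hjT : T < j := by
            by_contra hjle
            push_neg at hjle
            rw [θ.concatAt_wsum_le T χ h0c hjle] at hj
            have := hall j
            omega
          have hsum : (θ.concatAt T χ h0c).wsum j = θ.wsum T + χ.wsum (j - T) := by
            have hh := θ.concatAt_wsum_add T χ h0c (j - T)
            rw [show T + (j - T) = j by omega] at hh
            exact hh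
          exact le_trans (infSigma_le_wsum χ (j - T)) (iE_le_iE.mpr (by omega))
        have hIvle : φ v ≤ φ v' - θ.wsum T := by
          have h5 : G.minVal (G.infSigma ∅) v ≤ iE (φ v' - θ.wsum T) :=
            le_trans (minVal_le_sval _ hσ' v) (sval_le _ σ' hstar)
          have hveq : iE (φ v) = G.minVal (G.infSigma ∅) v := (hφ v).2 hP
          rw [← hveq, iE_le_iE] at h5
          exact h5
        have hs : θ.wsum T ≤ -(G.w v v') - 1 := by omega
        have hT1v : θ.vert (T + 1) = v' := by
          have hh := hc T (by rw [hT]; exact hm)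
          rw [hT] at hh
          rw [hh, hσapp, if_pos rfl]
        have hwT1 : θ.wsum (T + 1) = θ.wsum T + G.w v v' := by
          rw [θ.wsum_succ, hT, hT1v]
        have htail0 : (θ.drop (T + 1)).vert 0 = v' := by
          rw [Path.drop_vert, Nat.add_zero]
          exact hT1v
        have htailc : (θ.drop (T + 1)).ConsMin σ := θ.drop_consMin (T + 1) hc
        have htaillow : ∀ m, φ v' + (k + 1) + 1 ≤ (θ.drop (T + 1)).wsum m := by
          intro m
          have h6 := θ.drop_wsum (T + 1) m
          have h7 := hall (T + 1 + m)
          omega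
        refine absurd (hgk1 (θ.drop (T + 1)) htail0 htailc) ?_
        rw [not_le]
        exact lt_of_lt_of_le
          (iE_lt_iE.mpr (by omega : φ v' + ((k : ℤ) + 1) < φ v' + ((k : ℤ) + 1) + 1))
          (le_infSigma _ (fun m => by have := htaillow m; omega))
      · push_neg at hhit
        have hθc' : θ.ConsMin σ' := by
          intro t hmt
          have hh := hc t hmt
          rw [hh, hσapp, if_neg (hhit t)]
        have hle : G.infSigma ∅ θ ≤ iE (φ v') := by
          rw [hIv']
          exact le_sval _ σ' h0 hθc'
        refine absurd hle ?_
        rw [not_le]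
        exact lt_of_le_of_lt (iE_le_iE.mpr (by omega : φ v' ≤ φ v' + (k : ℤ))) hθ
    have gdown : ∀ t : ℕ, ∀ θ : G.Path, θ.vert 0 = v' → θ.ConsMin σ →
        G.infSigma ∅ θ ≤ iE (φ v' + ((B - t : ℕ) : ℤ)) := by
      intro t
      induction t with
      | zero =>
          intro θ h0 hc
          refine le_trans (infSigma_nonpos θ) ?_
          rw [← iE_zero]
          refine iE_le_iE.mpr ?_
          rw [Nat.sub_zero, hBval]
          omega
      | succ t ih =>
          rcases Nat.lt_or_ge t B with hlt | hge
          · refine step (B - (t + 1)) ?_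
            intro θ h0 hc
            have hh := ih θ h0 hc
            have hcast : ((B - t : ℕ) : ℤ) = ((B - (t + 1) : ℕ) : ℤ) + 1 := by
              have : (B - t : ℕ) = (B - (t + 1) : ℕ) + 1 := by omega
              rw [this]
              push_cast
              ring
            rw [hcast] at hh
            exact le_trans hh (iE_le_iE.mpr (by omega))
          · have heq : (B - (t + 1) : ℕ) = (B - t : ℕ) := by omega
            rw [heq]
            exact ih
    have g0 : ∀ θ : G.Path, θ.vert 0 = v' → θ.ConsMin σ →
        G.infSigma ∅ θ ≤ iE (φ v') := by
      intro θ h0 hc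
      have hh := gdown B θ h0 hc
      rw [Nat.sub_self] at hh
      exact le_trans hh (iE_le_iE.mpr (by omega))
    have hfinal : G.sval (G.infSigma ∅) σ v ≤ iE (G.w v v' + φ v') := by
      refine sval_le _ _ (fun θ h0 hc => ?_)
      have h1 : θ.vert 1 = v' := by
        have hh := hc 0 (by rw [h0]; exact hm)
        rw [h0] at hh
        simp only [Nat.zero_add] at hh
        rw [hh, hσapp, if_pos rfl]
      have htail0 : (θ.drop 1).vert 0 = v' := by rw [Path.drop_vert]; exact h1
      have htailc : (θ.drop 1).ConsMin σ := θ.drop_consMin 1 hc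
      by_contra hgt
      push_neg at hgt
      have hw1 : θ.wsum 1 = G.w v v' := by
        have hh := θ.wsum_succ 0
        rw [θ.wsum_zero, h0] at hh
        simp only [Nat.zero_add] at hh
        rw [h1] at hh
        omega
      have hlow : ∀ m, φ v' + 1 ≤ (θ.drop 1).wsum m := by
        intro m
        have h2 := θ.drop_wsum 1 m
        have h3 : iE (G.w v v' + φ v') < iE (θ.wsum (1 + m)) :=
          lt_of_lt_of_le hgt (infSigma_le_wsum θ (1 + m))
        rw [iE_lt_iE] at h3
        omega
      refine absurd (g0 (θ.drop 1) htail0 htailc) ?_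
      rw [not_le]
      exact lt_of_lt_of_le (iE_lt_iE.mpr (by omega : φ v' < φ v' + 1)) (le_infSigma _ hlow)
    have hcontra : iE (φ v) ≤ iE (G.w v v' + φ v') := by
      have hveq : iE (φ v) = G.minVal (G.infSigma ∅) v := (hφ v).2 hP
      rw [hveq]
      exact le_trans (minVal_le_sval _ hσ v) hfinal
    rw [iE_le_iE] at hcontra
    omega

end PSide

end MPGame
namespace MPGame

variable {V : Type*}

section Zones

lemma exists_descending {α : Sort*} {r : α → α → Prop} (h : ¬ WellFounded r) :
    ∃ f : ℕ → α, ∀ n, r (f (n + 1)) (f n) := by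
  have h1 : ∃ a, ¬ Acc r a := by
    by_contra hh
    push_neg at hh
    exact h ⟨hh⟩
  have h2 : ∀ a, ¬ Acc r a → ∃ b, r b a ∧ ¬ Acc r b := by
    intro a ha
    by_contra hb
    push_neg at hb
    exact ha (Acc.intro a hb)
  obtain ⟨a0, ha0⟩ := h1
  let f : ℕ → {a : α // ¬ Acc r a} := fun n =>
    Nat.rec ⟨a0, ha0⟩ (fun _ p => ⟨Classical.choose (h2 p.1 p.2),
      (Classical.choose_spec (h2 p.1 p.2)).2⟩) n
  refine ⟨fun n => (f n).1, fun n => ?_⟩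
  exact (Classical.choose_spec (h2 (f n).1 (f n).2)).1

variable [Fintype V] {G : MPGame V} {φ : V → ℤ}

/-- any relation contained in the zero-potential-weight edges is well-founded -/
lemma wf_pot_zero (hz : G.NoZeroCycle) {r : V → V → Prop}
    (hr : ∀ x y, r y x → G.E x y ∧ G.w x y + φ y - φ x = 0) : WellFounded r := by
  by_contra h
  obtain ⟨f, hf⟩ := exists_descending h
  set π : G.Path := ⟨f, fun i => (hr _ _ (hf i)).1⟩ with hπdef
  have hvert : ∀ k, π.vert k = f k := fun k => rfl
  have hws : ∀ k, π.wsum k = φ (f 0) - φ (f k) := by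
    intro k
    induction k with
    | zero => rw [π.wsum_zero]; omega
    | succ k ih =>
        rw [π.wsum_succ, ih, hvert, hvert]
        have := (hr _ _ (hf k)).2
        omega
  obtain ⟨a, b, hab, heq⟩ := Finite.exists_ne_map_eq_of_infinite f
  rcases lt_or_gt_of_ne hab with hlt | hlt
  · refine hz π a b hlt (by rw [hvert, hvert, heq]) ?_
    rw [hws, hws, heq]
  · refine hz π b a hlt (by rw [hvert, hvert, heq]) ?_
    rw [hws, hws, heq]

variable (hz : G.NoZeroCycle)
  (hφ : ∀ v, (G.MPval v < 0 → ((φ v : ℝ) : EReal) = G.supSigmaVal ∅ v) ∧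
             (0 < G.MPval v → ((φ v : ℝ) : EReal) = G.infSigmaVal ∅ v))

variable (G φ) in
open Classical in
/-- canonical good move for Max in the P region -/
noncomputable def witP (v : V) : V :=
  if h : 0 < G.MPval v then Classical.choose (F3max hz hφ h)
  else Classical.choose (G.sinkless v)

include hz hφ

lemma witP_spec {v : V} (h : 0 < G.MPval v) :
    G.E v (witP G φ hz hφ v) ∧ φ v ≤ G.w v (witP G φ hz hφ v) + φ (witP G φ hz hφ v) ∧
      0 < G.MPval (witP G φ hz hφ v) := by
  unfold witP
  rw [dif_pos h]
  exact Classical.choose_spec (F3max hz hφ h)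

/-- negative vertices are in the zone ZN of the potential reduction -/
lemma mem_ZNr {v : V} (hN : G.MPval v < 0) : (G.pot φ).ZNr Set.univ v := by
  set r : V → V → Prop := fun y x => G.MPval x < 0 ∧ G.MPval y < 0 ∧ G.E x y ∧
    G.w x y + φ y - φ x = 0 ∧ (G.IsMin x → y = witN G φ hz hφ x) with hrdef
  have hwf : WellFounded r := wf_pot_zero hz (fun x y hxy => ⟨hxy.2.2.1, hxy.2.2.2.1⟩)
  revert hN
  refine hwf.induction (C := fun x => G.MPval x < 0 → (G.pot φ).ZNr Set.univ x) v ?_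
  intro x IH hx
  by_cases hm : G.IsMin x
  · have hspec := witN_spec hz hφ hx hm
    have hedge := witN_edge hz hφ (v := x)
    rcases lt_or_eq_of_le (by omega : G.w x (witN G φ hz hφ x) + φ (witN G φ hz hφ x) - φ x ≤ 0)
      with hlt | heq
    · exact ZNr.minNeg x _ (Set.mem_univ _) hm (Set.mem_univ _) hedge hlt
    · refine ZNr.minZero x _ (Set.mem_univ _) hm (Set.mem_univ _) hedge heq ?_
      exact IH _ ⟨hx, hspec.2, hedge, heq, fun _ => rfl⟩ hspec.2
  · have hF := (F2 hz hφ hx).2 hm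
    refine ZNr.max x (Set.mem_univ _) hm ?_ ?_
    · intro y _ hE
      have := (hF y hE).1
      show G.w x y + φ y - φ x ≤ 0
      omega
    · intro y _ hE hw0
      have hw0' : G.w x y + φ y - φ x = 0 := hw0
      exact IH y ⟨hx, (hF y hE).2, hE, hw0', fun hmin => absurd hmin hm⟩ (hF y hE).2

/-- positive vertices are in the zone ZP of the potential reduction -/
lemma mem_ZPr {v : V} (hP : 0 < G.MPval v) : (G.pot φ).ZPr Set.univ v := by
  set r : V → V → Prop := fun y x => 0 < G.MPval x ∧ 0 < G.MPval y ∧ G.E x y ∧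
    G.w x y + φ y - φ x = 0 ∧ (¬ G.IsMin x → y = witP G φ hz hφ x) with hrdef
  have hwf : WellFounded r := wf_pot_zero hz (fun x y hxy => ⟨hxy.2.2.1, hxy.2.2.2.1⟩)
  revert hP
  refine hwf.induction (C := fun x => 0 < G.MPval x → (G.pot φ).ZPr Set.univ x) v ?_
  intro x IH hx
  by_cases hm : G.IsMin x
  · refine ZPr.min x (Set.mem_univ _) hm ?_ ?_
    · intro y _ hE
      have := F3minIneq hz hφ hx (F3minMem hz hφ hx hm hE) hm hE
      show 0 ≤ G.w x y + φ y - φ x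
      omega
    · intro y _ hE hw0
      have hw0' : G.w x y + φ y - φ x = 0 := hw0
      have hyP := F3minMem hz hφ hx hm hE
      exact IH y ⟨hx, hyP, hE, hw0', fun h => absurd hm h⟩ hyP
  · have hspec := witP_spec hz hφ hx
    rcases lt_or_eq_of_le (by omega : 0 ≤ G.w x (witP G φ hz hφ x) + φ (witP G φ hz hφ x) - φ x)
      with hlt | heq
    · exact ZPr.maxPos x _ (Set.mem_univ _) hm (Set.mem_univ _) hspec.1 hlt
    · refine ZPr.maxZero x _ (Set.mem_univ _) hm (Set.mem_univ _) hspec.1 heq.symm ?_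
      exact IH _ ⟨hx, hspec.2.2, hspec.1, heq.symm, fun _ => rfl⟩ hspec.2.2

/-- vertices of ZN are not positive -/
lemma ZNr_not_pos : ∀ v : V, (G.pot φ).ZNr Set.univ v → 0 < G.MPval v → False := by
  intro v h
  induction h with
  | minNeg x y _ hm _ hE hw =>
      intro hP
      have hw' : G.w x y + φ y - φ x < 0 := hw
      have := F3minIneq hz hφ hP (F3minMem hz hφ hP hm hE) hm hE
      omega
  | minZero x y _ hm _ hE hw hzn IH =>
      intro hP
      exact IH (F3minMem hz hφ hP hm hE)
  | max x _ hm hle hall IH =>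
      intro hP
      obtain ⟨y, hE, hineq, hyP⟩ := F3max hz hφ hP
      have h1 : G.w x y + φ y - φ x ≤ 0 := hle y (Set.mem_univ _) hE
      have hw0 : (G.pot φ).w x y = 0 := by
        show G.w x y + φ y - φ x = 0
        omega
      exact IH y (Set.mem_univ _) hE hw0 hyP

/-- vertices of ZP are not negative -/
lemma ZPr_not_neg : ∀ v : V, (G.pot φ).ZPr Set.univ v → G.MPval v < 0 → False := by
  intro v h
  induction h with
  | maxPos x y _ hm _ hE hw =>
      intro hN
      have hw' : 0 < G.w x y + φ y - φ x := hw
      have := ((F2 hz hφ hN).2 hm y hE).1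
      omega
  | maxZero x y _ hm _ hE hw hzp IH =>
      intro hN
      exact IH ((F2 hz hφ hN).2 hm y hE).2
  | min x _ hm hge hall IH =>
      intro hN
      obtain ⟨y, hE, hineq, hyN⟩ := (F2 hz hφ hN).1 hm
      have h1 : 0 ≤ G.w x y + φ y - φ x := hge y (Set.mem_univ _) hE
      have hw0 : (G.pot φ).w x y = 0 := by
        show G.w x y + φ y - φ x = 0
        omega
      exact IH y (Set.mem_univ _) hE hw0 hyN

end Zones

end MPGame

open MPGame in
/-- in a finite game with no zero cycle, the potential
assigning to each vertex of MP-value `< 0` its (finite, integral) `supΣ`-value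
and to each vertex of MP-value `> 0` its (finite, integral) `infΣ`-value is a
reducing potential. -/
theorem statement6 {V : Type*} [Fintype V] (G : MPGame V)
    (hz : G.NoZeroCycle) (φ : V → ℤ)
    (hφ : ∀ v, (G.MPval v < 0 → ((φ v : ℝ) : EReal) = G.supSigmaVal ∅ v) ∧
               (0 < G.MPval v → ((φ v : ℝ) : EReal) = G.infSigmaVal ∅ v)) :
    (G.pot φ).Reduced := by
  constructor
  · intro v hv
    have hN : G.MPval v < 0 := by
      rcases Mval_dichotomy hz v with h | h
      · exact h
      · exact absurd h (fun h' => ZNr_not_pos hz hφ v hv h')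
    constructor
    · intro hm
      obtain ⟨v', hE, hile, hN'⟩ := (F2 hz hφ hN).1 hm
      exact ⟨v', Set.mem_univ _, hE, by show G.w v v' + φ v' - φ v ≤ 0; omega,
        mem_ZNr hz hφ hN'⟩
    · intro hm v' _ hE
      obtain ⟨hile, hN'⟩ := (F2 hz hφ hN).2 hm v' hE
      exact ⟨by show G.w v v' + φ v' - φ v ≤ 0; omega, mem_ZNr hz hφ hN'⟩
  · intro v hv
    have hP : 0 < G.MPval v := by
      rcases Mval_dichotomy hz v with h | h
      · exact absurd h (fun h' => ZPr_not_neg hz hφ v hv h')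
      · exact h
    constructor
    · intro hm
      obtain ⟨hE, hile, hP'⟩ := witP_spec hz hφ hP
      exact ⟨witP G φ hz hφ v, Set.mem_univ _, hE,
        by show 0 ≤ G.w v _ + φ _ - φ v; omega, mem_ZPr hz hφ hP'⟩
    · intro hm v' _ hE
      have hP' := F3minMem hz hφ hP hm hE
      have hile := F3minIneq hz hφ hP hP' hm hE
      exact ⟨by show 0 ≤ G.w v v' + φ v' - φ v; omega, mem_ZPr hz hφ hP'⟩
end

section
/- Let G be a game with no cycle of total weight zero, let A be a trap for Min, let φ_A be a positively reducing potential over A, let G' = G ∖ A, assumed to be a trap for Max, and let φ' be a reducing potential for G'. Let δ ∈ ℤ be such that for every edge v'a of G with v' ∈ G' and a ∈ A, δ ≥ −w(v'a) − φ_A(a) + φ'(v'). Let φ be the potential which coincides with φ_A + δ on A and with φ' on G'. Then φ is a reducing potential for G; moreover ZN_φ = ZN_{φ'} and ZP_φ = ZP_{φ'} ∪ A. -/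
section Aux

open MPGame

variable {V : Type*}

lemma aux_ZNr_mem {G : MPGame V} {D : Set V} {v : V} (h : G.ZNr D v) : v ∈ D := by
  cases h <;> assumption

lemma aux_ZPr_mem {G : MPGame V} {D : Set V} {v : V} (h : G.ZPr D v) : v ∈ D := by
  cases h <;> assumption

lemma aux_ZNr_pot_congr (G : MPGame V) (φ ψ : V → ℤ) {D : Set V}
    (hw : ∀ v ∈ D, ∀ v' ∈ D, (G.pot φ).w v v' = (G.pot ψ).w v v') :
    ∀ v, (G.pot φ).ZNr D v → (G.pot ψ).ZNr D v := by
  intro v h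
  induction h with
  | minNeg v v' hv hm hv' he hw0 =>
      exact .minNeg v v' hv hm hv' he (hw v hv v' hv' ▸ hw0)
  | minZero v v' hv hm hv' he hw0 _ ih =>
      exact .minZero v v' hv hm hv' he (hw v hv v' hv' ▸ hw0) ih
  | max v hv hm hle hz ih =>
      refine .max v hv hm ?_ ?_
      · intro v' hv' he
        rw [← hw v hv v' hv']; exact hle v' hv' he
      · intro v' hv' he hw0
        exact ih v' hv' he (by rw [hw v hv v' hv']; exact hw0)

lemma aux_ZPr_pot_congr (G : MPGame V) (φ ψ : V → ℤ) {D : Set V}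
    (hw : ∀ v ∈ D, ∀ v' ∈ D, (G.pot φ).w v v' = (G.pot ψ).w v v') :
    ∀ v, (G.pot φ).ZPr D v → (G.pot ψ).ZPr D v := by
  intro v h
  induction h with
  | maxPos v v' hv hm hv' he hw0 =>
      exact .maxPos v v' hv hm hv' he (hw v hv v' hv' ▸ hw0)
  | maxZero v v' hv hm hv' he hw0 _ ih =>
      exact .maxZero v v' hv hm hv' he (hw v hv v' hv' ▸ hw0) ih
  | min v hv hm hge hz ih =>
      refine .min v hv hm ?_ ?_
      · intro v' hv' he
        rw [← hw v hv v' hv']; exact hge v' hv' he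
      · intro v' hv' he hw0
        exact ih v' hv' he (by rw [hw v hv v' hv']; exact hw0)

lemma aux_ZNr_le (H : MPGame V) {D D' : Set V} (hsub : D ⊆ D')
    (htrap : ∀ v ∈ D, ¬ H.IsMin v → ∀ v', H.E v v' → v' ∈ D) :
    ∀ v, H.ZNr D v → H.ZNr D' v := by
  intro v h
  induction h with
  | minNeg v v' hv hm hv' he hw => exact .minNeg v v' (hsub hv) hm (hsub hv') he hw
  | minZero v v' hv hm hv' he hw _ ih => exact .minZero v v' (hsub hv) hm (hsub hv') he hw ih
  | max v hv hm hle hz ih =>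
      refine .max v (hsub hv) hm ?_ ?_
      · intro v' _ he; exact hle v' (htrap v hv hm v' he) he
      · intro v' _ he hw; exact ih v' (htrap v hv hm v' he) he hw

lemma aux_ZPr_le (H : MPGame V) {D D' : Set V} (hsub : D ⊆ D')
    (htrap : ∀ v ∈ D, H.IsMin v → ∀ v', H.E v v' → v' ∈ D) :
    ∀ v, H.ZPr D v → H.ZPr D' v := by
  intro v h
  induction h with
  | maxPos v v' hv hm hv' he hw => exact .maxPos v v' (hsub hv) hm (hsub hv') he hw
  | maxZero v v' hv hm hv' he hw _ ih => exact .maxZero v v' (hsub hv) hm (hsub hv') he hw ih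
  | min v hv hm hge hz ih =>
      refine .min v (hsub hv) hm ?_ ?_
      · intro v' _ he; exact hge v' (htrap v hv hm v' he) he
      · intro v' _ he hw; exact ih v' (htrap v hv hm v' he) he hw

lemma aux_wsum_succ {G : MPGame V} (π : G.Path) (n : ℕ) :
    π.wsum (n + 1) = π.wsum n + G.w (π.vert n) (π.vert (n + 1)) :=
  Finset.sum_range_succ _ n

lemma aux_noZeroCycle_pot {G : MPGame V} (hz : G.NoZeroCycle) (φ : V → ℤ) :
    (G.pot φ).NoZeroCycle := by
  intro π i j hij hvij hsum
  let π' : G.Path := ⟨π.vert, π.adj⟩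
  have hws : ∀ k, π.wsum k = π'.wsum k + (φ (π.vert k) - φ (π.vert 0)) := by
    intro k
    induction k with
    | zero => simp [Path.wsum]
    | succ n ih =>
        have h1 : π.wsum (n + 1) = π.wsum n +
            (G.w (π.vert n) (π.vert (n + 1)) + φ (π.vert (n + 1)) - φ (π.vert n)) :=
          aux_wsum_succ π n
        have h2 : π'.wsum (n + 1) = π'.wsum n + G.w (π.vert n) (π.vert (n + 1)) :=
          aux_wsum_succ π' n
        rw [h1, h2, ih]; ring
  apply hz π' i j hij hvij
  have h1 := hws i
  have h2 := hws j
  rw [hvij] at h1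
  rw [hsum] at h1
  omega

lemma aux_dichotomy [Finite V] (H : MPGame V) (hz : H.NoZeroCycle) (D : Set V)
    (hD : ∀ v ∈ D, ∃ v' ∈ D, H.E v v') :
    ∀ v ∈ D, H.ZNr D v ∨ H.ZPr D v := by
  classical
  by_contra hc
  push_neg at hc
  obtain ⟨v0, hv0D, hv0N, hv0P⟩ := hc
  set S : Set V := {v | v ∈ D ∧ ¬ H.ZNr D v ∧ ¬ H.ZPr D v} with hSdef
  have step : ∀ v ∈ S, ∃ v' ∈ S, H.E v v' ∧ H.w v v' = 0 := by
    rintro v ⟨hvD, hvN, hvP⟩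
    by_cases hm : H.IsMin v
    · have hge : ∀ v' ∈ D, H.E v v' → 0 ≤ H.w v v' := by
        intro v' hv' he
        by_contra hlt
        exact hvN (.minNeg v v' hvD hm hv' he (by omega))
      by_contra hco
      push_neg at hco
      apply hvP
      refine .min v hvD hm hge ?_
      intro v' hv' he hw0
      by_contra hP'
      have hN' : ¬ H.ZNr D v' := fun h => hvN (.minZero v v' hvD hm hv' he hw0 h)
      exact (hco v' ⟨hv', hN', hP'⟩ he) hw0
    · have hle : ∀ v' ∈ D, H.E v v' → H.w v v' ≤ 0 := by
        intro v' hv' he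
        by_contra hlt
        exact hvP (.maxPos v v' hvD hm hv' he (by omega))
      by_contra hco
      push_neg at hco
      apply hvN
      refine .max v hvD hm hle ?_
      intro v' hv' he hw0
      by_contra hN'
      have hP' : ¬ H.ZPr D v' := fun h => hvP (.maxZero v v' hvD hm hv' he hw0 h)
      exact (hco v' ⟨hv', hN', hP'⟩ he) hw0
  have hstep : ∀ v, ∃ v', (v ∈ S → (v' ∈ S ∧ H.w v v' = 0)) ∧ H.E v v' := by
    intro v
    by_cases hv : v ∈ S
    · obtain ⟨v', h1, h2, h3⟩ := step v hv
      exact ⟨v', fun _ => ⟨h1, h3⟩, h2⟩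
    · obtain ⟨v', h⟩ := H.sinkless v
      exact ⟨v', fun h' => absurd h' hv, h⟩
  choose f hfS hfE using hstep
  let π : H.Path := ⟨fun n => f^[n] v0, fun i => by
    show H.E (f^[i] v0) (f^[i + 1] v0)
    rw [Function.iterate_succ_apply']
    exact hfE _⟩
  have hmem : ∀ n, f^[n] v0 ∈ S := by
    intro n
    induction n with
    | zero => exact ⟨hv0D, hv0N, hv0P⟩
    | succ n ih =>
        rw [Function.iterate_succ_apply']
        exact (hfS _ ih).1
  have hzero : ∀ n, H.w (π.vert n) (π.vert (n + 1)) = 0 := by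
    intro n
    have h := (hfS _ (hmem n)).2
    show H.w (f^[n] v0) (f^[n + 1] v0) = 0
    rw [Function.iterate_succ_apply']
    exact h
  have hws : ∀ k, π.wsum k = 0 := by
    intro k
    induction k with
    | zero => simp [Path.wsum]
    | succ n ih =>
        rw [aux_wsum_succ, ih, hzero]; ring
  obtain ⟨i, j, hne, heq⟩ := Finite.exists_ne_map_eq_of_infinite π.vert
  rcases hne.lt_or_gt with h | h
  · exact hz π i j h heq (by rw [hws, hws])
  · exact hz π j i h heq.symm (by rw [hws, hws])

end Aux

open MPGame in
/-- gluing reducing potentials, Lemma 2: if `A` is a trap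
for Min over which `φ_A` is positively reducing, `G' = G ∖ A` is a trap for
Max with reducing potential `φ'`, and `δ` dominates
`−w(v'a) − φ_A(a) + φ'(v')` over all edges from `G'` to `A`, then the
potential coinciding with `φ_A + δ` on `A` and with `φ'` on `G'` is a
reducing potential for `G`; moreover `ZN_φ = ZN_{φ'}` and
`ZP_φ = ZP_{φ'} ∪ A`. -/
theorem statement9 {V : Type*} [Fintype V] (G : MPGame V)
    (hz : G.NoZeroCycle)
    (A : Set V) (hA : G.TrapForMin A)
    (φA : V → ℤ) (hφA : (G.pot φA).PosReducedOn A)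
    (hA' : G.TrapForMax Aᶜ)
    (φ' : V → ℤ) (hφ' : (G.pot φ').ReducedOn Aᶜ)
    (δ : ℤ)
    (hδ : ∀ v' ∈ Aᶜ, ∀ a ∈ A, G.E v' a → δ ≥ -G.w v' a - φA a + φ' v')
    (φ : V → ℤ)
    (hφ : ∀ v, (v ∈ A → φ v = φA v + δ) ∧ (v ∈ Aᶜ → φ v = φ' v)) :
    (G.pot φ).Reduced ∧
    (∀ v, (G.pot φ).ZN v ↔ (G.pot φ').ZNr Aᶜ v) ∧
    (∀ v, (G.pot φ).ZP v ↔ ((G.pot φ').ZPr Aᶜ v ∨ v ∈ A)) := by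
  classical
  have hwpot : ∀ (ψ : V → ℤ) v v', (G.pot ψ).w v v' = G.w v v' + ψ v' - ψ v :=
    fun _ _ _ => rfl
  have hφAeq : ∀ v ∈ A, φ v = φA v + δ := fun v hv => (hφ v).1 hv
  have hφ'eq : ∀ v ∈ Aᶜ, φ v = φ' v := fun v hv => (hφ v).2 hv
  have hwA : ∀ v ∈ A, ∀ v' ∈ A, (G.pot φ).w v v' = (G.pot φA).w v v' := by
    intro v hv v' hv'
    rw [hwpot, hwpot, hφAeq v hv, hφAeq v' hv']; ring
  have hwC : ∀ v ∈ Aᶜ, ∀ v' ∈ Aᶜ, (G.pot φ).w v v' = (G.pot φ').w v v' := by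
    intro v hv v' hv'
    rw [hwpot, hwpot, hφ'eq v hv, hφ'eq v' hv']
  have hwCs : ∀ v ∈ Aᶜ, ∀ v' ∈ Aᶜ, (G.pot φ').w v v' = (G.pot φ).w v v' :=
    fun v hv v' hv' => (hwC v hv v' hv').symm
  have hcross : ∀ v' ∈ Aᶜ, ∀ a ∈ A, G.E v' a → 0 ≤ (G.pot φ).w v' a := by
    intro v' hv' a ha he
    have h := hδ v' hv' a ha he
    rw [hwpot, hφAeq a ha, hφ'eq v' hv']
    omega
  have hzφ : (G.pot φ).NoZeroCycle := aux_noZeroCycle_pot hz φ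
  have hnoZN_A : ∀ v, ¬ (G.pot φ).ZNr A v :=
    fun v h => hφA v (aux_ZNr_pot_congr G φ φA hwA v h)
  have hAZPA : ∀ v ∈ A, (G.pot φ).ZPr A v := by
    intro v hv
    rcases aux_dichotomy (G.pot φ) hzφ A hA.1 v hv with h | h
    · exact absurd h (hnoZN_A v)
    · exact h
  have hAZP : ∀ v ∈ A, (G.pot φ).ZPr Set.univ v :=
    fun v hv => aux_ZPr_le (G.pot φ) (Set.subset_univ A)
      (fun u hu hm u' he => hA.2 u hu hm u' he) v (hAZPA v hv)
  -- ZN: univ → Aᶜ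
  have hZNsub : ∀ v, (G.pot φ).ZNr Set.univ v → (G.pot φ).ZNr Aᶜ v := by
    intro v h
    induction h with
    | minNeg v v' _ hm _ he hw =>
        have hvA : v ∉ A := fun hvA =>
          hnoZN_A v (.minNeg v v' hvA hm (hA.2 v hvA hm v' he) he hw)
        have hv'A : v' ∉ A := fun h' => absurd hw (not_lt.mpr (hcross v hvA v' h' he))
        exact .minNeg v v' hvA hm hv'A he hw
    | minZero v v' _ hm _ he hw _ ih =>
        have hv'A : v' ∈ Aᶜ := aux_ZNr_mem ih
        have hvA : v ∉ A := fun hvA => hv'A (hA.2 v hvA hm v' he)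
        exact .minZero v v' hvA hm hv'A he hw ih
    | max v _ hm hle hzz ih =>
        have hvA : v ∉ A := by
          intro hvA
          apply hnoZN_A v
          refine .max v hvA hm (fun v' hv' he => hle v' trivial he) ?_
          intro v' hv' he hw
          exact absurd hv' (aux_ZNr_mem (ih v' trivial he hw))
        exact .max v hvA hm (fun v' _ he => hle v' trivial he)
          (fun v' _ he hw => ih v' trivial he hw)
  -- ZN: Aᶜ → univ
  have hZNback : ∀ v, (G.pot φ).ZNr Aᶜ v → (G.pot φ).ZNr Set.univ v :=
    aux_ZNr_le (G.pot φ) (Set.subset_univ Aᶜ)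
      (fun u hu hm u' he => hA'.2 u hu hm u' he)
  -- ZP: univ → Aᶜ ∨ A
  have hZPsub : ∀ v, (G.pot φ).ZPr Set.univ v → (G.pot φ).ZPr Aᶜ v ∨ v ∈ A := by
    intro v h
    induction h with
    | maxPos v v' _ hm _ he hw =>
        by_cases hvA : v ∈ A
        · exact Or.inr hvA
        · exact Or.inl (.maxPos v v' hvA hm (hA'.2 v hvA hm v' he) he hw)
    | maxZero v v' _ hm _ he hw _ ih =>
        by_cases hvA : v ∈ A
        · exact Or.inr hvA
        · have hv' : v' ∈ Aᶜ := hA'.2 v hvA hm v' he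
          exact Or.inl (.maxZero v v' hvA hm hv' he hw (ih.resolve_right hv'))
    | min v _ hm hge hzz ih =>
        by_cases hvA : v ∈ A
        · exact Or.inr hvA
        · refine Or.inl (.min v hvA hm (fun v' _ he => hge v' trivial he) ?_)
          intro v' hv' he hw
          exact (ih v' trivial he hw).resolve_right hv'
  -- ZP: Aᶜ → univ
  have hZPembed : ∀ v, (G.pot φ).ZPr Aᶜ v → (G.pot φ).ZPr Set.univ v := by
    intro v h
    induction h with
    | maxPos v v' _ hm _ he hw => exact .maxPos v v' trivial hm trivial he hw
    | maxZero v v' _ hm _ he hw _ ih => exact .maxZero v v' trivial hm trivial he hw ih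
    | min v hv hm hge hzz ih =>
        refine .min v trivial hm ?_ ?_
        · intro v' _ he
          by_cases h' : v' ∈ A
          · exact hcross v hv v' h' he
          · exact hge v' h' he
        · intro v' _ he hw
          by_cases h' : v' ∈ A
          · exact hAZP v' h'
          · exact ih v' h' he hw
  refine ⟨⟨?_, ?_⟩, ?_, ?_⟩
  · -- ZN clause of Reduced
    intro v hv
    have hv2 := hZNsub v hv
    have hvc : v ∈ Aᶜ := aux_ZNr_mem hv2
    have hv3 : (G.pot φ').ZNr Aᶜ v := aux_ZNr_pot_congr G φ φ' hwC v hv2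
    obtain ⟨h1, h2⟩ := hφ'.1 v hv3
    constructor
    · intro hm
      obtain ⟨v', hv', he, hwle, hZ⟩ := h1 hm
      refine ⟨v', trivial, he, ?_, hZNback v' (aux_ZNr_pot_congr G φ' φ hwCs v' hZ)⟩
      rw [hwC v hvc v' hv']; exact hwle
    · intro hm v' _ he
      have hv'c : v' ∈ Aᶜ := hA'.2 v hvc hm v' he
      obtain ⟨hwle, hZ⟩ := h2 hm v' hv'c he
      refine ⟨?_, hZNback v' (aux_ZNr_pot_congr G φ' φ hwCs v' hZ)⟩
      rw [hwC v hvc v' hv'c]; exact hwle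
  · -- ZP clause of Reduced
    intro v hv
    by_cases hvA : v ∈ A
    · constructor
      · intro hm
        cases hAZPA v hvA with
        | maxPos _ v' _ _ hv' he hw => exact ⟨v', trivial, he, le_of_lt hw, hAZP v' hv'⟩
        | maxZero _ v' _ _ hv' he hw _ => exact ⟨v', trivial, he, le_of_eq hw.symm, hAZP v' hv'⟩
        | min _ _ hmm _ _ => exact absurd hmm hm
      · intro hm v' _ he
        have hv'A : v' ∈ A := hA.2 v hvA hm v' he
        cases hAZPA v hvA with
        | maxPos _ v'' _ hmm _ _ _ => exact absurd hm hmm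
        | maxZero _ v'' _ hmm _ _ _ _ => exact absurd hm hmm
        | min _ _ _ hge _ => exact ⟨hge v' hv'A he, hAZP v' hv'A⟩
    · have hv2 : (G.pot φ).ZPr Aᶜ v := (hZPsub v hv).resolve_right hvA
      have hv3 : (G.pot φ').ZPr Aᶜ v := aux_ZPr_pot_congr G φ φ' hwC v hv2
      obtain ⟨h1, h2⟩ := hφ'.2 v hv3
      constructor
      · intro hm
        obtain ⟨v', hv', he, hwge, hZ⟩ := h1 hm
        refine ⟨v', trivial, he, ?_, hZPembed v' (aux_ZPr_pot_congr G φ' φ hwCs v' hZ)⟩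
        rw [hwC v hvA v' hv']; exact hwge
      · intro hm v' _ he
        by_cases h' : v' ∈ A
        · exact ⟨hcross v hvA v' h' he, hAZP v' h'⟩
        · obtain ⟨hwge, hZ⟩ := h2 hm v' h' he
          refine ⟨?_, hZPembed v' (aux_ZPr_pot_congr G φ' φ hwCs v' hZ)⟩
          rw [hwC v hvA v' h']; exact hwge
  · -- ZN iff
    intro v
    constructor
    · intro h
      exact aux_ZNr_pot_congr G φ φ' hwC v (hZNsub v h)
    · intro h
      exact hZNback v (aux_ZNr_pot_congr G φ' φ hwCs v h)
  · -- ZP iff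
    intro v
    constructor
    · intro h
      rcases hZPsub v h with h' | h'
      · exact Or.inl (aux_ZPr_pot_congr G φ φ' hwC v h')
      · exact Or.inr h'
    · rintro (h | h)
      · exact hZPembed v (aux_ZPr_pot_congr G φ' φ hwCs v h)
      · exact hAZP v h
end

section
/- Let G be a game with no cycle of total weight zero, let F be a set of vertices containing N = N_G such that the supΣ^N-value is finite on F, let H be the subgame obtained by removing F from G (assumed to be a subgame), let φ_H be a reducing potential for H, and assume H^+ = ZP_{φ_H} is empty and H^- = ZN_{φ_H} is nonempty. Then there exists a vertex v ∈ N_H ∩ V_Max (in particular all edges from v into H have weight < 0) which has an edge of weight ≥ 0 towards F. -/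
open MPGame in
private lemma zerocycle_aux {V : Type*} (G : MPGame V) (hz : G.NoZeroCycle)
    {φ : V → ℤ} (π : G.Path) (i j : ℕ) (hij : i < j) (heq : π.vert i = π.vert j)
    (hwnn : ∀ n, 0 ≤ G.w (π.vert n) (π.vert (n + 1)))
    (hwphi : ∀ n, G.w (π.vert n) (π.vert (n + 1)) ≤ φ (π.vert n) - φ (π.vert (n + 1))) :
    False := by
  have tel : ∑ l ∈ Finset.Ico i j, (φ (π.vert l) - φ (π.vert (l + 1)))
      = φ (π.vert i) - φ (π.vert j) := by
    rw [Finset.sum_Ico_eq_sub _ hij.le,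
      Finset.sum_range_sub' (fun k => φ (π.vert k)) j,
      Finset.sum_range_sub' (fun k => φ (π.vert k)) i]
    ring
  have hS1 : 0 ≤ ∑ l ∈ Finset.Ico i j, G.w (π.vert l) (π.vert (l + 1)) :=
    Finset.sum_nonneg fun l _ => hwnn l
  have hS2 : ∑ l ∈ Finset.Ico i j, G.w (π.vert l) (π.vert (l + 1))
      ≤ φ (π.vert i) - φ (π.vert j) :=
    (Finset.sum_le_sum fun l _ => hwphi l).trans_eq tel
  rw [heq, sub_self] at hS2
  have hdiff : π.wsum j - π.wsum i
      = ∑ l ∈ Finset.Ico i j, G.w (π.vert l) (π.vert (l + 1)) := by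
    rw [MPGame.Path.wsum, MPGame.Path.wsum, Finset.sum_Ico_eq_sub _ hij.le]
  exact hz π i j hij heq (by omega)

open MPGame in
/-- first part of Lemma 3b: with `F ⊇ N` as before,
`H = G ∖ F` a subgame with reducing potential `φ_H`, if `H⁺ = ZP_{φ_H}` is
empty and `H⁻ = ZN_{φ_H}` is nonempty, then there is a Max-vertex
`v ∈ N_H` (in particular all its edges into `H` have weight `< 0`) with an
edge of weight `≥ 0` towards `F`. -/
theorem statement11 {V : Type*} [Fintype V] (G : MPGame V)
    (hz : G.NoZeroCycle)
    (F : Set V) (hNF : G.Nset ⊆ F)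
    (g : V → ℤ) (hg : ∀ u ∈ F, G.supSigmaVal G.Nset u = ((g u : ℝ) : EReal))
    (hsub : ∀ u ∈ Fᶜ, ∃ u' ∈ Fᶜ, G.E u u')
    (φH : V → ℤ) (hred : (G.pot φH).ReducedOn Fᶜ)
    (hplus : ∀ u, ¬ (G.pot φH).ZPr Fᶜ u)
    (hminus : ∃ u, (G.pot φH).ZNr Fᶜ u) :
    ∃ v, v ∈ G.NsetOn Fᶜ ∧ ¬ G.IsMin v ∧
      (∀ u ∈ Fᶜ, G.E v u → G.w v u < 0) ∧
      ∃ v' ∈ F, G.E v v' ∧ 0 ≤ G.w v v' := by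
    classical
  by_contra hcon
  -- Key step: every vertex of Fᶜ has a successor in Fᶜ along an edge of
  -- nonnegative original weight and nonpositive potential-reduced weight.
  have key : ∀ v ∈ Fᶜ, ∃ u, u ∈ Fᶜ ∧ G.E v u ∧ 0 ≤ G.w v u ∧
      G.w v u + φH u - φH v ≤ 0 := by
    intro v hv
    by_cases hmin : G.IsMin v
    · -- Min vertex: get an edge with reduced weight ≤ 0 from ZP = ∅,
      -- its original weight is ≥ 0 since v ∉ Nset.
      have hex : ∃ u, u ∈ Fᶜ ∧ G.E v u ∧ G.w v u + φH u - φH v ≤ 0 := by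
        by_contra hne
        push_neg at hne
        refine hplus v (MPGame.ZPr.min v hv hmin ?_ ?_)
        · intro u hu he
          exact le_of_lt (hne u hu he)
        · intro u hu he hz0
          exact absurd hz0 (ne_of_gt (hne u hu he))
      obtain ⟨u, hu, he, hwphi⟩ := hex
      refine ⟨u, hu, he, ?_, hwphi⟩
      by_contra hneg
      push_neg at hneg
      exact hv (hNF ⟨Set.mem_univ v, Or.inl ⟨hmin, u, Set.mem_univ u, he, hneg⟩⟩)
    · -- Max vertex: if all Fᶜ-edges were < 0 we would contradict hcon,
      -- so there is an Fᶜ-edge of weight ≥ 0; its reduced weight is ≤ 0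
      -- since ZP = ∅.
      have hex : ∃ u, u ∈ Fᶜ ∧ G.E v u ∧ 0 ≤ G.w v u := by
        by_contra hne
        push_neg at hne
        apply hcon
        refine ⟨v, ⟨hv, Or.inr ⟨hmin, fun u hu he => hne u hu he⟩⟩, hmin,
          fun u hu he => hne u hu he, ?_⟩
        have hvN : v ∉ G.Nset := fun h => hv (hNF h)
        by_contra hno
        push_neg at hno
        refine hvN ⟨Set.mem_univ v, Or.inr ⟨hmin, fun u _ he => ?_⟩⟩
        by_cases huF : u ∈ F
        · exact hno u huF he
        · exact hne u huF he
      obtain ⟨u, hu, he, hw⟩ := hex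
      refine ⟨u, hu, he, hw, ?_⟩
      by_contra hpos
      push_neg at hpos
      exact hplus v (MPGame.ZPr.maxPos v u hv hmin hu he hpos)
  choose! nxt hnF hnE hnW hnP using key
  obtain ⟨u0, hu0⟩ := hminus
  have hu0F : u0 ∈ (Fᶜ : Set V) := by cases hu0 <;> assumption
  -- build the infinite path
  set vert : ℕ → V := fun n => nxt^[n] u0 with hvert
  have hstep : ∀ n, vert (n + 1) = nxt (vert n) := by
    intro n
    simp only [hvert, Function.iterate_succ_apply']
  have hvF : ∀ n, vert n ∈ Fᶜ := by
    intro n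
    induction n with
    | zero => exact hu0F
    | succ n ih => rw [hstep]; exact hnF _ ih
  have hadj : ∀ n, G.E (vert n) (vert (n + 1)) := by
    intro n; rw [hstep]; exact hnE _ (hvF n)
  have hwnn : ∀ n, 0 ≤ G.w (vert n) (vert (n + 1)) := by
    intro n; rw [hstep]; exact hnW _ (hvF n)
  have hwphi : ∀ n, G.w (vert n) (vert (n + 1)) ≤ φH (vert n) - φH (vert (n + 1)) := by
    intro n
    have := hnP _ (hvF n)
    rw [hstep]
    omega
  let π : G.Path := ⟨vert, hadj⟩
  -- pigeonhole: a vertex repeats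
  obtain ⟨i, j, hne, hij⟩ := Finite.exists_ne_map_eq_of_infinite vert
  -- wlog i < j
  rcases hne.lt_or_gt with hlt | hlt
  case _ => exact (zerocycle_aux G hz π i j hlt hij hwnn hwphi)
  case _ => exact (zerocycle_aux G hz π j i hlt hij.symm hwnn hwphi)
end
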